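/- arXiv:1702.06692 — 7 statements merged into one kernel-verified Lean document; each statement's English description precedes it below -/
import Mathlib

section
/- For every l_0 ∈ Z^k the following hold. (i) The counting function Q'(l) := Σ c(l̃ + l_0), summed over l̃ ∈ Z^k with l̃ ≥ 0 and l̃ ≱ l, agrees with some quasipolynomial 𝔔' on (l_{**} + 𝒦) ∩ Z^k for some l_{**} ∈ Z^k. (ii) For any such 𝔔' one has 𝔔(l_0) = Σ_{l̃ ∈ Z^k, l̃ ≱ l_0} c(l̃) + 𝔔'(0), i.e., the quasipolynomial of the original series evaluated at l_0 equals the finite evaluation at 1 of the 'non-effective' part of the shifted series plus the periodic constant of its effective part. -/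
open Matrix

open scoped Classical

noncomputable section

namespace Plumbing

variable {V : Type*} [Fintype V] [DecidableEq V]

/-- The rational matrix associated with the integral intersection matrix. -/
def Aq (A : Matrix V V ℤ) : Matrix V V ℚ := A.map fun n => (n : ℚ)

/-- Negative definiteness of the intersection form. -/
def NegDef (A : Matrix V V ℤ) : Prop :=
  ∀ x : V → ℚ, x ≠ 0 → x ⬝ᵥ (Aq A).mulVec x < 0

/-- The dual base element `E*_v`, the `v`-th column of `−A⁻¹`. -/
def Estar (A : Matrix V V ℤ) (v : V) : V → ℚ := fun w => (-(Aq A)⁻¹) w v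

/-- Membership in the dual lattice `L' = {x ∈ ℚ^V : Ax ∈ ℤ^V}`. -/
def memLp (A : Matrix V V ℤ) (x : V → ℚ) : Prop :=
  ∀ v, ∃ n : ℤ, (Aq A).mulVec x v = (n : ℚ)

/-- `x` and `y` are in the same class of `H = L'/L`, i.e. `x - y ∈ L`. -/
def sameClass {W : Type*} (x y : W → ℚ) : Prop := ∀ w, ∃ n : ℤ, x w - y w = (n : ℚ)

/-- The valency of a vertex. -/
def deg {W : Type*} (G : SimpleGraph W) (w : W) : ℕ := (G.neighborSet w).ncard

/-- The coefficients `c_v(k)`. -/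
def ccoef (d k : ℕ) : ℤ :=
  if 2 ≤ d then (-1 : ℤ) ^ k * (Nat.choose (d - 2) k) else (Nat.choose (k + 1 - d) k)

/-- The coefficient `z(l')` of the multivariable series `Z(t)`. -/
def zcoef (A : Matrix V V ℤ) (δ : V → ℕ) (l' : V → ℚ) : ℤ :=
  ∑ᶠ k : V → ℕ,
    if (∑ v, (k v : ℚ) • Estar A v) = l' then ∏ v, ccoef (δ v) (k v) else 0

/-- The counting function `Q_{[x]}(x)`. -/
def Qcount (A : Matrix V V ℤ) (δ : V → ℕ) (x : V → ℚ) : ℤ :=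
  ∑ᶠ l' : V → ℚ,
    if memLp A l' ∧ sameClass l' x ∧ ¬ x ≤ l' then zcoef A δ l' else 0

/-- The counting function `Q_{[x],I}(x)` of the reduced series. -/
def QcountI (A : Matrix V V ℤ) (δ : V → ℕ) (I : Set V) (x : V → ℚ) : ℤ :=
  ∑ᶠ l' : V → ℚ,
    if memLp A l' ∧ sameClass l' x ∧ ¬ (∀ v ∈ I, x v ≤ l' v) then zcoef A δ l' else 0

/-- The counting function `Q_{0,I}(x)` on the integral lattice. -/
def QcountI0 (A : Matrix V V ℤ) (δ : V → ℕ) (I : Set V) (x : V → ℤ) : ℤ :=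
  ∑ᶠ l : V → ℤ,
    if ¬ (∀ v ∈ I, x v ≤ l v) then zcoef A δ (fun v => (l v : ℚ)) else 0

/-- The modified counting function `q_{[x],J}(x)`. -/
def qmod (A : Matrix V V ℤ) (δ : V → ℕ) (J : Set V) (x : V → ℚ) : ℤ :=
  ∑ᶠ l' : V → ℚ,
    if memLp A l' ∧ sameClass l' x ∧ (∀ v ∈ J, l' v < x v) then zcoef A δ l' else 0

/-- The coefficient function of the reduced series `Z(t_W)`. -/
def zred (A : Matrix V V ℤ) (δ : V → ℕ) (W : Set V) (y : W → ℚ) : ℤ :=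
  ∑ᶠ l' : V → ℚ, if (fun w : W => l' w.1) = y then zcoef A δ l' else 0

/-- The intersection matrix of a full subgraph. -/
def subM (A : Matrix V V ℤ) (W : Set V) : Matrix W W ℤ :=
  A.submatrix Subtype.val Subtype.val

/-- The restriction operator `j*_W : L'(T) → L'(T(W))`. -/
def jstar (A : Matrix V V ℤ) (W : Set V) (l' : V → ℚ) : W → ℚ :=
  (Aq (subM A W))⁻¹.mulVec fun w => (Aq A).mulVec l' w.1

/-- The canonical cycle `K`, the unique solution of `(K + E_v, E_v) = -2`. -/
def Kcan (A : Matrix V V ℤ) : V → ℚ :=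
  (Aq A)⁻¹.mulVec fun v => (-2 : ℚ) - (A v v : ℚ)

/-- The Riemann–Roch expression `χ(x) = -(x, x + K)/2`. -/
def chi (A : Matrix V V ℤ) (x : V → ℚ) : ℚ :=
  -(x ⬝ᵥ (Aq A).mulVec (x + Kcan A)) / 2

/-- The weight `w(l, J)` of the lattice cube `(l, J)`. -/
def wcube (A : Matrix V V ℤ) (l : V → ℤ) (J : Finset V) : ℚ :=
  J.powerset.sup' ⟨∅, Finset.empty_mem_powerset J⟩
    fun J' => chi A fun v => (l v : ℚ) + if v ∈ J' then 1 else 0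

/-- Quasipolynomials on `ℤ^W`: polynomial on each coset of a finite index subgroup. -/
def IsQuasiPoly {W : Type*} [Fintype W] (Q : (W → ℤ) → ℚ) : Prop :=
  ∃ Λ : AddSubgroup (W → ℤ), Λ.index ≠ 0 ∧
    ∀ c : W → ℤ, ∃ p : MvPolynomial W ℚ,
      ∀ l ∈ Λ, Q (c + l) = MvPolynomial.eval (fun w => ((c + l) w : ℚ)) p

/-- The vertex set of the connected component `c` of the complement of `I`. -/
def compSet (G : SimpleGraph V) (I : Set V) (c : (G.induce Iᶜ).ConnectedComponent) :
    Set V :=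
  {v : V | ∃ h : v ∈ (Iᶜ : Set V), (G.induce Iᶜ).connectedComponentMk ⟨v, h⟩ = c}

/-- The boundary of a subset `V2` of the vertices. -/
def Bdry (G : SimpleGraph V) (V2 : Set V) : Set V :=
  {u ∈ V2 | ∃ w, w ∉ V2 ∧ G.Adj u w}

/-- `V_{1,u}` : the vertex `u` together with the vertex sets of all connected
components of the complement of `V2` adjacent to `u`. -/
def V1u (G : SimpleGraph V) (V2 : Set V) (u : V) : Set V :=
  insert u {v : V | ∃ h : v ∈ (V2ᶜ : Set V), ∃ w, ∃ hw : w ∈ (V2ᶜ : Set V),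
    G.Adj u w ∧ (G.induce V2ᶜ).connectedComponentMk ⟨v, h⟩ =
      (G.induce V2ᶜ).connectedComponentMk ⟨w, hw⟩}

end Plumbing

open Plumbing

/-!
Write `Q'` for the counting function of the effective part of the series shifted by `l₀`.
Splitting the sum defining `Q (l + l₀)` according to whether `l̃ ≥ l₀` gives
`Q'(l) = Q(l + l₀) - Q(l₀)` for `l ≥ 0`, so `l ↦ 𝔔(l + l₀) - Q(l₀)` is a quasipolynomial for `Q'`
on a translate of the cone that lies deep enough inside it. For (ii), any other quasipolynomial
for `Q'` agrees with this one on the ray `{n • w | n ≥ 1}` through a lattice point `w` deep in the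
cone; along a ray with step in a common finite-index sublattice both are polynomials in `n`, so
they also agree at `n = 0`, which is the identity `𝔔'(0) = 𝔔(l₀) - Q(l₀)`.
-/

open Metric Pointwise

theorem finsum_ite_nonneg_not_le_add_eq_sub {G M : Type*} [AddCommGroup G] [PartialOrder G]
    [IsOrderedAddMonoid G] [DecidableLE G] [AddCommGroup M] {c : G → M}
    (hc : ∀ b, {s | c s ≠ 0 ∧ ¬ b ≤ s}.Finite) (l₀ : G) {l : G} (hl : 0 ≤ l) :
    ∑ᶠ s, (if 0 ≤ s ∧ ¬ l ≤ s then c (s + l₀) else 0)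
      = (∑ᶠ s, if ¬ l + l₀ ≤ s then c s else 0) - ∑ᶠ s, if ¬ l₀ ≤ s then c s else 0 := by
  have hfin : ∀ {p : G → Prop} [DecidablePred p] (b : G), (∀ s, p s → ¬ b ≤ s) →
      (Function.support fun s => if p s then c s else 0).Finite := fun b hb =>
    (hc b).subset fun s hs => by
      rw [Function.mem_support, ite_ne_right_iff] at hs
      exact ⟨hs.2, hb s hs.1⟩
  set g : G → M := fun s => if l₀ ≤ s ∧ ¬ l + l₀ ≤ s then c s else 0
  calc ∑ᶠ s, (if 0 ≤ s ∧ ¬ l ≤ s then c (s + l₀) else 0)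
      = ∑ᶠ s, g (Equiv.addRight l₀ s) := finsum_congr fun s => by simp [g]
    _ = ∑ᶠ s, g s := finsum_comp_equiv _
    _ = _ := by
      rw [eq_sub_iff_add_eq,
        ← finsum_add_distrib (hfin (l + l₀) fun _ => And.right) (hfin l₀ fun _ => id)]
      refine finsum_congr fun s => ?_
      by_cases h₀ : l₀ ≤ s
      · by_cases h₁ : l + l₀ ≤ s <;> simp [h₀, h₁]
      · have h₁ : ¬ l + l₀ ≤ s := fun h => h₀ ((le_add_of_nonneg_left hl).trans h)
        simp [h₀, h₁]

namespace PointedCone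

theorem coe_hull_range_eq {ι E : Type*} [Fintype ι] [AddCommGroup E] [Module ℝ E]
    (V : ι → E) :
    (hull ℝ (Set.range V) : Set E)
      = {x | ∃ t : ι → ℝ, (∀ j, 0 ≤ t j) ∧ x = ∑ j, t j • V j} := by
  ext x
  simp only [SetLike.mem_coe, Submodule.mem_span_range_iff_exists_fun, Set.mem_ofPred_eq]
  constructor
  · rintro ⟨t, rfl⟩
    exact ⟨fun j => t j, fun j => (t j).2, rfl⟩
  · rintro ⟨t, ht, rfl⟩
    exact ⟨fun j => ⟨t j, ht j⟩, rfl⟩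

theorem hull_range_le_positive {ι E : Type*} [AddCommGroup E] [PartialOrder E]
    [IsOrderedAddMonoid E] [Module ℝ E] [PosSMulMono ℝ E] {V : ι → E} (hV : ∀ j, 0 ≤ V j) :
    hull ℝ (Set.range V) ≤ positive ℝ E :=
  Submodule.span_le.mpr (Set.range_subset_iff.mpr hV)

section Seminormed

variable {E : Type*} [SeminormedAddCommGroup E] [Module ℝ E] {C : PointedCone ℝ E} {w x : E}
  {r : ℝ}

theorem closedBall_subset_of_sub_mem (hw : closedBall w r ⊆ C) (hx : x - w ∈ C) :
    closedBall x r ⊆ C := fun y hy => by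
  rw [show y = (x - w) + (w + (y - x)) by abel]
  exact C.add_mem hx (hw (by simpa [mem_closedBall_iff_norm, ← dist_eq_norm] using hy))

theorem closedBall_nsmul_subset (hw : closedBall w r ⊆ C) {n : ℕ} (hn : n ≠ 0) :
    closedBall (n • w) r ⊆ C := fun y hy => by
  obtain ⟨n, rfl⟩ := Nat.exists_eq_succ_of_ne_zero hn
  refine closedBall_subset_of_sub_mem hw ?_ hy
  rw [succ_nsmul, add_sub_cancel_right]
  exact C.nsmul_mem (hw (mem_closedBall_self (dist_nonneg.trans hy))) n

end Seminormed

variable {ι κ : Type*} [Fintype ι] [Fintype κ]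

theorem exists_forall_mem_hull_le_mul (V : ι → κ → ℝ) (hV : ∀ j i, 0 < V j i) :
    ∃ C : ℝ, 0 ≤ C ∧ ∀ x ∈ hull ℝ (Set.range V), ∀ i i', x i' ≤ C * x i := by
  set C : ℝ := ∑ p : ι × κ × κ, V p.1 p.2.2 / V p.1 p.2.1
  have hC : ∀ j i i', V j i' ≤ C * V j i := fun j i i' => by
    rw [← div_le_iff₀ (hV j i)]
    exact Finset.single_le_sum (f := fun p : ι × κ × κ => V p.1 p.2.2 / V p.1 p.2.1)
      (fun p _ => (div_pos (hV _ _) (hV _ _)).le) (Finset.mem_univ (j, i, i'))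
  refine ⟨C, Finset.sum_nonneg fun p _ => (div_pos (hV _ _) (hV _ _)).le,
    fun x hx => Submodule.span_induction ?_ ?_ ?_ ?_ hx⟩
  · rintro _ ⟨j, rfl⟩ i i'
    exact hC j i i'
  · simp
  · intro x y _ _ hx hy i i'
    simpa only [Pi.add_apply, mul_add] using add_le_add (hx i i') (hy i i')
  · rintro ⟨t, ht⟩ x _ hx i i'
    simpa only [Nonneg.mk_smul, Pi.smul_apply, smul_eq_mul, mul_left_comm C t]
      using mul_le_mul_of_nonneg_left (hx i i') ht

theorem finite_setOf_intCast_mem_hull_not_le (V : ι → κ → ℝ) (hV : ∀ j i, 0 < V j i)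
    (b : κ → ℤ) :
    {s : κ → ℤ | (fun i => (s i : ℝ)) ∈ hull ℝ (Set.range V) ∧ ¬ b ≤ s}.Finite := by
  obtain ⟨C, hC, hle⟩ := exists_forall_mem_hull_le_mul V hV
  set M : ℤ := ∑ i, |b i|
  refine (Set.finite_Icc (0 : κ → ℤ) fun _ => ⌈C * M⌉).subset ?_
  rintro s ⟨hs, hbs⟩
  obtain ⟨i, hi⟩ : ∃ i, s i < b i := by simpa [Pi.le_def] using hbs
  have hbM : (b i : ℝ) ≤ M := by
    exact_mod_cast (le_abs_self (b i)).trans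
      (Finset.single_le_sum (f := fun i => |b i|) (fun _ _ => abs_nonneg _) (Finset.mem_univ i))
  refine ⟨fun i' => Int.cast_nonneg_iff.mp
    (hull_range_le_positive (fun j => (hV j · |>.le)) hs i'), fun i' => Int.cast_le (R := ℝ).mp ?_⟩
  calc (s i' : ℝ) ≤ C * s i := hle _ hs i i'
    _ ≤ C * M := mul_le_mul_of_nonneg_left ((Int.cast_lt.mpr hi).le.trans hbM) hC
    _ ≤ ⌈C * M⌉ := Int.le_ceil _

theorem exists_closedBall_intCast_subset {C : PointedCone ℝ (κ → ℝ)}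
    (hC : (interior (C : Set (κ → ℝ))).Nonempty) (r : ℝ) :
    ∃ w : κ → ℤ, closedBall (fun i => (w i : ℝ)) r ⊆ C := by
  obtain ⟨x₀, hx₀⟩ := hC
  obtain ⟨ε, hε, hball⟩ := Metric.isOpen_iff.mp isOpen_interior x₀ hx₀
  obtain ⟨n, hn, hn0⟩ : ∃ n : ℕ, (r + 1) / ε < n ∧ (0 : ℝ) < n := by
    obtain ⟨n, hn⟩ := exists_nat_gt (max ((r + 1) / ε) 0)
    exact ⟨n, max_lt_iff.mp hn⟩
  refine ⟨fun i => ⌊n * x₀ i⌋, fun y hy => ?_⟩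
  have hfloor : dist (fun i => (⌊n * x₀ i⌋ : ℝ)) ((n : ℝ) • x₀) ≤ 1 :=
    (dist_pi_le_iff zero_le_one).mpr fun i => by
      rw [Real.dist_eq, abs_sub_comm, Pi.smul_apply, smul_eq_mul, Int.self_sub_floor,
        abs_of_nonneg (Int.fract_nonneg _)]
      exact (Int.fract_lt_one _).le
  have hy' : y ∈ (n : ℝ) • ball x₀ ε := by
    rw [_root_.smul_ball hn0.ne', Real.norm_natCast, mem_ball]
    calc dist y ((n : ℝ) • x₀) ≤ r + 1 := (dist_triangle _ _ _).trans (add_le_add hy hfloor)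
      _ < n * ε := (div_lt_iff₀ hε).mp hn
  obtain ⟨z, hz, rfl⟩ := hy'
  exact C.smul_mem hn0.le (interior_subset (hball hz))

end PointedCone

namespace Plumbing.IsQuasiPoly

variable {W : Type*} [Fintype W] {𝔔 𝔔₁ 𝔔₂ : (W → ℤ) → ℚ}

theorem comp_add_sub (h : IsQuasiPoly 𝔔) (l₀ : W → ℤ) (q : ℚ) :
    IsQuasiPoly fun l => 𝔔 (l + l₀) - q := by
  obtain ⟨Λ, hΛ, hp⟩ := h
  refine ⟨Λ, hΛ, fun c => ?_⟩
  obtain ⟨p, hp⟩ := hp (c + l₀)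
  refine ⟨MvPolynomial.bind₁ (fun i => MvPolynomial.X i + MvPolynomial.C (l₀ i : ℚ)) p
      - MvPolynomial.C q, fun l hl => ?_⟩
  show 𝔔 (c + l + l₀) - q = _
  rw [add_right_comm, hp l hl, map_sub, MvPolynomial.eval_C]
  simp only [← MvPolynomial.aeval_eq_eval, MvPolynomial.aeval_bind₁]
  refine congrArg (fun x => MvPolynomial.aeval x p - q) (funext fun i => ?_)
  simp only [map_add, MvPolynomial.aeval_X, MvPolynomial.aeval_C, Pi.add_apply,
    Algebra.algebraMap_self, RingHom.id_apply]
  push_cast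
  ring

theorem exists_polynomial_eval_nsmul (h : IsQuasiPoly 𝔔) :
    ∃ d ≠ 0, ∀ c w : W → ℤ, ∃ P : Polynomial ℚ, ∀ n : ℕ,
      𝔔 (c + (n * d) • w) = P.eval (n : ℚ) := by
  obtain ⟨Λ, hΛ, hp⟩ := h
  refine ⟨Λ.index, hΛ, fun c w => ?_⟩
  obtain ⟨p, hp⟩ := hp c
  refine ⟨MvPolynomial.aeval (fun i => Polynomial.C (c i : ℚ) +
    Polynomial.C ((Λ.index • w) i : ℚ) * Polynomial.X) p, fun n => ?_⟩
  rw [mul_comm, mul_nsmul, hp _ (Λ.nsmul_mem (Λ.nsmul_index_mem w) n),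
    ← Polynomial.coe_aeval_eq_eval, ← AlgHom.comp_apply, MvPolynomial.comp_aeval,
    MvPolynomial.aeval_eq_eval]
  refine congrArg (fun x => MvPolynomial.eval x p) (funext fun i => ?_)
  simp [mul_comm]

theorem apply_eq_of_forall_nsmul (h₁ : IsQuasiPoly 𝔔₁) (h₂ : IsQuasiPoly 𝔔₂) (c w : W → ℤ)
    (h : ∀ n : ℕ, n ≠ 0 → 𝔔₁ (c + n • w) = 𝔔₂ (c + n • w)) : 𝔔₁ c = 𝔔₂ c := by
  obtain ⟨d₁, hd₁, hP₁⟩ := h₁.exists_polynomial_eval_nsmul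
  obtain ⟨d₂, hd₂, hP₂⟩ := h₂.exists_polynomial_eval_nsmul
  obtain ⟨P₁, hP₁⟩ := hP₁ c (d₂ • w)
  obtain ⟨P₂, hP₂⟩ := hP₂ c (d₁ • w)
  have hP : ∀ n : ℕ, P₁.eval ((n + 1 : ℕ) : ℚ) = P₂.eval ((n + 1 : ℕ) : ℚ) := fun n => by
    rw [← hP₁, ← hP₂, smul_smul, smul_smul, mul_right_comm _ d₁ d₂]
    exact h _ (by positivity)
  have hP₁₂ : P₁ = P₂ := Polynomial.eq_of_infinite_eval_eq _ _ <|
    Set.infinite_of_injective_forall_mem (Nat.cast_injective.comp (add_left_injective 1)) hP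
  have h0₁ := hP₁ 0
  have h0₂ := hP₂ 0
  simp only [Nat.cast_zero, zero_mul, zero_smul, add_zero] at h0₁ h0₂
  rw [h0₁, h0₂, hP₁₂]

end Plumbing.IsQuasiPoly

theorem statement4_general (k m : ℕ)
    (Vj : Fin m → Fin k → ℝ) (hVj : ∀ j i, 0 < Vj j i)
    (K : Set (Fin k → ℝ))
    (hK : K = {x | ∃ t : Fin m → ℝ, (∀ j, 0 ≤ t j) ∧ x = ∑ j, t j • Vj j})
    (hKint : (interior K).Nonempty)
    (c : (Fin k → ℤ) → ℤ)
    (hsupp : ∀ l, c l ≠ 0 → (fun i => (l i : ℝ)) ∈ K)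
    (Q : (Fin k → ℤ) → ℤ)
    (hQ : ∀ l, Q l = ∑ᶠ lt : Fin k → ℤ, if ¬ l ≤ lt then c lt else 0)
    (𝔔 : (Fin k → ℤ) → ℚ) (h𝔔 : IsQuasiPoly 𝔔)
    (lstar : Fin k → ℤ)
    (hagree : ∀ l : Fin k → ℤ,
      (fun i => (l i : ℝ) - (lstar i : ℝ)) ∈ K → (Q l : ℚ) = 𝔔 l)
    (l₀ : Fin k → ℤ) :
    (∃ (𝔔' : (Fin k → ℤ) → ℚ) (lss : Fin k → ℤ), IsQuasiPoly 𝔔' ∧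
        ∀ l : Fin k → ℤ, (fun i => (l i : ℝ) - (lss i : ℝ)) ∈ K →
          ((∑ᶠ lt : Fin k → ℤ, if 0 ≤ lt ∧ ¬ l ≤ lt then c (lt + l₀) else 0 : ℤ) : ℚ)
            = 𝔔' l) ∧
    (∀ (𝔔' : (Fin k → ℤ) → ℚ) (lss : Fin k → ℤ), IsQuasiPoly 𝔔' →
        (∀ l : Fin k → ℤ, (fun i => (l i : ℝ) - (lss i : ℝ)) ∈ K →
          ((∑ᶠ lt : Fin k → ℤ, if 0 ≤ lt ∧ ¬ l ≤ lt then c (lt + l₀) else 0 : ℤ) : ℚ)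
            = 𝔔' l) →
        𝔔 l₀ = (Q l₀ : ℚ) + 𝔔' 0) := by
  rw [← PointedCone.coe_hull_range_eq] at hK
  subst hK
  set C := PointedCone.hull ℝ (Set.range Vj)
  set ι : (Fin k → ℤ) →+ (Fin k → ℝ) := (Int.castAddHom ℝ).compLeft (Fin k)
  have hι : ∀ l l' : Fin k → ℤ, (fun i => (l i : ℝ) - (l' i : ℝ)) = ι (l - l') :=
    fun l l' => by ext; simp [ι]
  simp only [hι] at hagree ⊢
  have hfin : ∀ b, {s | c s ≠ 0 ∧ ¬ b ≤ s}.Finite := fun b =>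
    (PointedCone.finite_setOf_intCast_mem_hull_not_le Vj hVj b).subset
      fun s hs => ⟨hsupp s hs.1, hs.2⟩
  have hshift : ∀ l, closedBall (ι l) ‖ι (l₀ - lstar)‖ ⊆ C →
      ((∑ᶠ lt : Fin k → ℤ, if 0 ≤ lt ∧ ¬ l ≤ lt then c (lt + l₀) else 0 : ℤ) : ℚ)
        = 𝔔 (l + l₀) - Q l₀ := fun l hl => by
    have hl_nonneg : 0 ≤ l := fun i => Int.cast_nonneg_iff.mp <|
      PointedCone.hull_range_le_positive (fun j => (hVj j · |>.le))
        (hl (mem_closedBall_self (norm_nonneg _))) i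
    have hl₀C : ι (l + l₀ - lstar) ∈ C := by
      rw [add_sub_assoc, map_add]
      exact hl (by simp)
    rw [finsum_ite_nonneg_not_le_add_eq_sub hfin l₀ hl_nonneg, ← hQ, ← hQ, Int.cast_sub,
      hagree _ hl₀C]
  refine ⟨?_, fun 𝔔' lss h𝔔' hagree' => ?_⟩
  · obtain ⟨w, hw⟩ : ∃ w, closedBall (ι w) ‖ι (l₀ - lstar)‖ ⊆ C :=
      PointedCone.exists_closedBall_intCast_subset hKint _
    exact ⟨_, w, h𝔔.comp_add_sub l₀ (Q l₀), fun l hl =>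
      hshift l (PointedCone.closedBall_subset_of_sub_mem hw (by rwa [← map_sub]))⟩
  obtain ⟨w, hw⟩ : ∃ w, closedBall (ι w) (max ‖ι (l₀ - lstar)‖ ‖ι lss‖) ⊆ C :=
    PointedCone.exists_closedBall_intCast_subset hKint _
  have h0 := h𝔔'.apply_eq_of_forall_nsmul (h𝔔.comp_add_sub l₀ (Q l₀)) 0 w fun n hn => by
    have hball := PointedCone.closedBall_nsmul_subset hw hn
    rw [← map_nsmul] at hball
    rw [zero_add, ← hagree' _ (hball (by simp)),
      hshift _ ((closedBall_subset_closedBall (le_max_left _ _)).trans hball)]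
  simp only [zero_add] at h0
  linarith

/-- shifting a series supported on a cone: the counting function of the
shifted series admits a quasipolynomial, and the value of the quasipolynomial of the
original series at `l₀` equals the finite part plus the periodic constant of the
effective part of the shifted series. -/
theorem statement4 (k m : ℕ) (hk : 1 ≤ k)
    (Vj : Fin m → Fin k → ℝ) (hVj : ∀ j i, 0 < Vj j i)
    (K : Set (Fin k → ℝ))
    (hK : K = {x | ∃ t : Fin m → ℝ, (∀ j, 0 ≤ t j) ∧ x = ∑ j, t j • Vj j})
    (hKint : (interior K).Nonempty)
    (c : (Fin k → ℤ) → ℤ)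
    (hsupp : ∀ l, c l ≠ 0 → (fun i => (l i : ℝ)) ∈ K)
    (Q : (Fin k → ℤ) → ℤ)
    (hQ : ∀ l, Q l = ∑ᶠ lt : Fin k → ℤ, if ¬ l ≤ lt then c lt else 0)
    (𝔔 : (Fin k → ℤ) → ℚ) (h𝔔 : IsQuasiPoly 𝔔)
    (lstar : Fin k → ℤ)
    (hagree : ∀ l : Fin k → ℤ,
      (fun i => (l i : ℝ) - (lstar i : ℝ)) ∈ K → (Q l : ℚ) = 𝔔 l)
    (l₀ : Fin k → ℤ) :
    (∃ (𝔔' : (Fin k → ℤ) → ℚ) (lss : Fin k → ℤ), IsQuasiPoly 𝔔' ∧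
        ∀ l : Fin k → ℤ, (fun i => (l i : ℝ) - (lss i : ℝ)) ∈ K →
          ((∑ᶠ lt : Fin k → ℤ, if 0 ≤ lt ∧ ¬ l ≤ lt then c (lt + l₀) else 0 : ℤ) : ℚ)
            = 𝔔' l) ∧
    (∀ (𝔔' : (Fin k → ℤ) → ℚ) (lss : Fin k → ℤ), IsQuasiPoly 𝔔' →
        (∀ l : Fin k → ℤ, (fun i => (l i : ℝ) - (lss i : ℝ)) ∈ K →
          ((∑ᶠ lt : Fin k → ℤ, if 0 ≤ lt ∧ ¬ l ≤ lt then c (lt + l₀) else 0 : ℤ) : ℚ)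
            = 𝔔' l) →
        𝔔 l₀ = (Q l₀ : ℚ) + 𝔔' 0) :=
  statement4_general k m Vj hVj K hK hKint c hsupp Q hQ 𝔔 h𝔔 lstar hagree l₀
end
end

section
/- The vectors {E*_v|_{V_2}}_{v∈V_2} ⊂ Q^{V_2} are linearly independent over Q, and every y ∈ Q^{V_2} with z_{V_2}(y) ≠ 0 (i.e., every element of the support of the reduced Poincaré series Z(t_{V_2})) can be written, in a unique way, as y = Σ_{v∈V_2} r_v·(E*_v|_{V_2}) with r_v ∈ Q and r_v ≥ 0 for all v ∈ V_2. -/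
open Matrix

open scoped Classical

noncomputable section

open Plumbing

/-!
The engine is the M-matrix property of `A` (nonnegative off-diagonal entries, negative definite
form): if `(A x)_i ≤ 0` at every negative coordinate of `x`, then `x ≥ 0`, since testing the form
on the negative part `x⁻` gives `(x⁻, x⁻) ≥ (x⁻, x⁺) ≥ 0`.

A combination `x = Σ_{w ∈ V₂} g_w E*_w` vanishing on `V₂` has `A x = -g` supported on `V₂`, so
`(x, x) = 0` and `x = 0`; hence the `E*_w|_{V₂}` form a basis of `ℚ^{V₂}`. A point `y` of the
support is the restriction of some `l = Σ_v k_v E*_v` with `k ≥ 0`. Writing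
`y = Σ_{w ∈ V₂} r_w E*_w|_{V₂}`, the difference `x = l - Σ_w r_w E*_w` vanishes on `V₂` and
`A x = -k + r`, so `x ≥ 0` by the M-matrix property, and then for `u ∈ V₂`
`r_u = (A x)_u + k_u ≥ Σ_{j ≠ u} A_{uj} x_j ≥ 0`.
-/

namespace Plumbing

theorem eq_zero_of_negDef_of_eq_zero_on {ι R : Type*} [Fintype ι] [CommRing R] [Preorder R]
    {M : Matrix ι ι R} {S : Set ι}
    (hM : ∀ x : ι → R, x ≠ 0 → x ⬝ᵥ M *ᵥ x < 0) {x : ι → R}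
    (hxS : ∀ i ∈ S, x i = 0) (hMx : ∀ i ∉ S, (M *ᵥ x) i = 0) : x = 0 := by
  by_contra hx
  have hquad : x ⬝ᵥ M *ᵥ x = 0 := Finset.sum_eq_zero fun i _ => by
    by_cases hi : i ∈ S
    · simp [hxS i hi]
    · simp [hMx i hi]
  exact (hM x hx).ne hquad

section MMatrix

variable {ι R : Type*} [Fintype ι] [Field R] [LinearOrder R] [IsStrictOrderedRing R]
  {M : Matrix ι ι R}

theorem mulVec_apply_nonneg_of_offDiag_nonneg (hoff : ∀ i j, i ≠ j → 0 ≤ M i j)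
    {x : ι → R} (hx : 0 ≤ x) {i : ι} (hxi : x i = 0) : 0 ≤ (M *ᵥ x) i :=
  Finset.sum_nonneg fun j _ => by
    rcases eq_or_ne i j with rfl | hij
    · simp [hxi]
    · exact mul_nonneg (hoff i j hij) (hx j)

theorem nonneg_of_negDef_of_offDiag_nonneg (hM : ∀ x : ι → R, x ≠ 0 → x ⬝ᵥ M *ᵥ x < 0)
    (hoff : ∀ i j, i ≠ j → 0 ≤ M i j) {x : ι → R} (hx : ∀ i, x i < 0 → (M *ᵥ x) i ≤ 0) :
    0 ≤ x := by
  rw [← negPart_eq_zero]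
  by_contra hne
  have hneg : x⁻ ⬝ᵥ M *ᵥ x ≤ 0 := Finset.sum_nonpos fun i _ => by
    rcases lt_or_ge (x i) 0 with hi | hi
    · exact mul_nonpos_of_nonneg_of_nonpos (negPart_nonneg _) (hx i hi)
    · simp [negPart_eq_zero.2 hi]
  have hcross : 0 ≤ x⁻ ⬝ᵥ M *ᵥ x⁺ := Finset.sum_nonneg fun i _ => by
    rcases lt_or_ge (x i) 0 with hi | hi
    · exact mul_nonneg (negPart_nonneg _) <|
        mulVec_apply_nonneg_of_offDiag_nonneg hoff (posPart_nonneg x) (posPart_eq_zero.2 hi.le)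
    · simp [negPart_eq_zero.2 hi]
  have hsplit : x⁻ ⬝ᵥ M *ᵥ x = x⁻ ⬝ᵥ M *ᵥ x⁺ - x⁻ ⬝ᵥ M *ᵥ x⁻ := by
    rw [← dotProduct_sub, ← mulVec_sub, posPart_sub_negPart]
  linarith [hM _ hne]

end MMatrix

variable {V : Type*} [Fintype V] [DecidableEq V] {A : Matrix V V ℤ}

theorem isUnit_det_of_negDef (hA : NegDef A) : IsUnit (Aq A).det := by
  rw [isUnit_iff_ne_zero]
  intro hdet
  obtain ⟨x, hx, hAx⟩ := exists_mulVec_eq_zero_iff.2 hdet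
  simpa [hAx] using hA x hx

theorem mulVec_estar (hA : IsUnit (Aq A).det) (v : V) :
    Aq A *ᵥ Estar A v = -Pi.single v 1 := by
  have : Estar A v = -(Aq A)⁻¹ *ᵥ Pi.single v 1 := by
    funext w
    simp [Estar, mulVec_single]
  rw [this, mulVec_mulVec, Matrix.mul_neg, mul_nonsing_inv _ hA, neg_mulVec, one_mulVec]

theorem mulVec_sum_smul_estar (hA : IsUnit (Aq A).det) (c : V → ℚ) :
    Aq A *ᵥ ∑ v, c v • Estar A v = -c := by
  funext i
  simp [mulVec_sum, mulVec_smul, mulVec_estar hA, Finset.sum_apply, Pi.single_apply]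

theorem mulVec_sum_subtype_smul_estar_apply (hA : IsUnit (Aq A).det) (S : Set V)
    (g : S → ℚ) (i : V) :
    (Aq A *ᵥ ∑ w : S, g w • Estar A w) i = -if h : i ∈ S then g ⟨i, h⟩ else 0 := by
  simp only [mulVec_sum, mulVec_smul, mulVec_estar hA, Finset.sum_apply, Pi.smul_apply,
    Pi.neg_apply, smul_neg, Finset.sum_neg_distrib, neg_inj]
  split_ifs with hi
  · rw [Finset.sum_eq_single ⟨i, hi⟩]
    · simp
    · intro w _ hw
      have hiw : i ≠ w := fun h => hw (Subtype.ext h.symm)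
      simp [hiw]
    · simp
  · refine Finset.sum_eq_zero fun w _ => ?_
    have hiw : i ≠ w := fun h => hi (h ▸ w.2)
    simp [hiw]

theorem linearIndependent_restrict_estar (hA : NegDef A) (S : Set V) :
    LinearIndependent ℚ (fun v : S => fun w : S => Estar A v w) := by
  have hdet := isUnit_det_of_negDef hA
  rw [Fintype.linearIndependent_iff]
  intro g hg
  have hx : ∑ w : S, g w • Estar A w = 0 := eq_zero_of_negDef_of_eq_zero_on hA (S := S)
    (fun i hi => by simpa [Finset.sum_apply] using congrFun hg ⟨i, hi⟩)
    (fun i hi => by rw [mulVec_sum_subtype_smul_estar_apply hdet, dif_neg hi, neg_zero])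
  intro u
  simpa [hx] using mulVec_sum_subtype_smul_estar_apply hdet S g u

theorem exists_nonneg_restrict_eq_sum_estar (hA : NegDef A) (hoff : ∀ i j, i ≠ j → 0 ≤ A i j)
    (S : Set V) {l : V → ℚ} (hl : ∀ i, (Aq A *ᵥ l) i ≤ 0) :
    ∃ r : S → ℚ, 0 ≤ r ∧ (fun u : S => l u) = ∑ w : S, r w • fun u : S => Estar A w u := by
  have hdet := isUnit_det_of_negDef hA
  have hoffQ : ∀ i j, i ≠ j → 0 ≤ Aq A i j := fun i j hij => by
    simpa [Aq] using hoff i j hij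
  have hspan := (linearIndependent_restrict_estar hA S).span_eq_top_of_card_eq_finrank'
    (Module.finrank_fintype_fun_eq_card ℚ).symm
  obtain ⟨r, hr⟩ := (Submodule.mem_span_range_iff_exists_fun ℚ).1
    (hspan ▸ Submodule.mem_top : (fun u : S => l u) ∈ _)
  set x := l - ∑ w : S, r w • Estar A w
  have hxS : ∀ i ∈ S, x i = 0 := fun i hi => by
    simpa [x, Finset.sum_apply, sub_eq_zero] using (congrFun hr ⟨i, hi⟩).symm
  have hAx : ∀ i, (Aq A *ᵥ x) i = (Aq A *ᵥ l) i + if h : i ∈ S then r ⟨i, h⟩ else 0 := by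
    simp [x, mulVec_sub, mulVec_sum_subtype_smul_estar_apply hdet]
  have hx : 0 ≤ x := nonneg_of_negDef_of_offDiag_nonneg hA hoffQ fun i hi => by
    have hiS : i ∉ S := fun h => hi.ne (hxS i h)
    simpa [hAx, hiS] using hl i
  refine ⟨r, fun u => show 0 ≤ r u from ?_, hr.symm⟩
  have := mulVec_apply_nonneg_of_offDiag_nonneg hoffQ hx (hxS u u.2)
  rw [hAx, dif_pos u.2, Subtype.coe_eta] at this
  linarith [hl u]

theorem exists_of_finsum_ite_ne_zero {α M : Type*} [AddCommMonoid M] {p : α → Prop}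
    [DecidablePred p] {f : α → M} (h : ∑ᶠ a, (if p a then f a else 0) ≠ 0) : ∃ a, p a ∧ f a ≠ 0 := by
  by_contra! h'
  exact h (finsum_eq_zero_of_forall_eq_zero fun a => by split_ifs with ha <;> simp [h' a, ha])

theorem exists_nat_of_zred_ne_zero {δ : V → ℕ} {W : Set V} {y : W → ℚ}
    (h : zred A δ W y ≠ 0) :
    ∃ k : V → ℕ, (fun w : W => (∑ v, (k v : ℚ) • Estar A v) w) = y := by
  unfold zred at h
  obtain ⟨l, rfl, hl⟩ := exists_of_finsum_ite_ne_zero h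
  obtain ⟨k, rfl, -⟩ := exists_of_finsum_ite_ne_zero hl
  exact ⟨k, rfl⟩

end Plumbing

theorem statement5_general (V : Type) [Fintype V] [DecidableEq V]
    (G : SimpleGraph V)
    (A : Matrix V V ℤ)
    (hAadj : ∀ v w : V, v ≠ w → A v w = if G.Adj v w then 1 else 0)
    (hAneg : NegDef A)
    (V2 : Set V) :
    LinearIndependent ℚ (fun v : V2 => fun w : V2 => Estar A v.1 w.1) ∧
    ∀ y : V2 → ℚ, zred A (deg G) V2 y ≠ 0 →
      ∃! r : V2 → ℚ, (∀ v, 0 ≤ r v) ∧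
        y = ∑ v : V2, r v • fun w : V2 => Estar A v.1 w.1 := by
  have lin := linearIndependent_restrict_estar hAneg V2
  refine ⟨lin, fun y hy => ?_⟩
  obtain ⟨k, rfl⟩ := exists_nat_of_zred_ne_zero hy
  have hoff : ∀ v w, v ≠ w → 0 ≤ A v w := fun v w hvw => by
    rw [hAadj v w hvw]
    split_ifs <;> norm_num
  have hAk : ∀ i, (Aq A *ᵥ ∑ v, (k v : ℚ) • Estar A v) i ≤ 0 := by
    simp [mulVec_sum_smul_estar (isUnit_det_of_negDef hAneg)]
  obtain ⟨r, hr0, hr⟩ := exists_nonneg_restrict_eq_sum_estar hAneg hoff V2 hAk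
  exact ⟨r, ⟨hr0, hr⟩, fun r' ⟨_, hr'⟩ =>
    funext (Fintype.linearIndependent_iffₛ.1 lin _ _ (hr' ▸ hr))⟩

/-- the restrictions `E*_v|_{V₂}`, `v ∈ V₂`, are linearly independent, and
every element of the support of the reduced series `Z(t_{V₂})` is, in a unique way, a
nonnegative rational combination of them. -/
theorem statement5 (V : Type) [Fintype V] [DecidableEq V]
    (G : SimpleGraph V) (hG : G.IsTree)
    (A : Matrix V V ℤ) (hAsymm : A.IsSymm)
    (hAadj : ∀ v w : V, v ≠ w → A v w = if G.Adj v w then 1 else 0)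
    (hAneg : NegDef A)
    (V2 : Set V) (hV2conn : (G.induce V2).Connected) :
    LinearIndependent ℚ (fun v : V2 => fun w : V2 => Estar A v.1 w.1) ∧
    ∀ y : V2 → ℚ, zred A (deg G) V2 y ≠ 0 →
      ∃! r : V2 → ℚ, (∀ v, 0 ≤ r v) ∧
        y = ∑ v : V2, r v • fun w : V2 => Estar A v.1 w.1 :=
  statement5_general V G A hAadj hAneg V2
end
end

section
/- Let u ∈ B with δ_{2,u} ≥ 2, set d = det(−A), and for v ∈ V_{1,u} set m_v = d·(E*_v)_u (these are positive integers). Then the rational function Π_{v∈V_{1,u}} (1 − t^{m_v})^{δ_v − 2}, where δ_v is the valency of v in T, is a polynomial with integer coefficients, and its degree equals Σ_{v∈V_{1,u}} (δ_v − 2)·m_v. -/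
open Matrix

open scoped Classical

noncomputable section

open Plumbing

/-!
The multiplicities `m_v` form the `u`-th row of `adj(-A)`. They are positive because `-A` is a
positive definite matrix with nonpositive off-diagonal entries on a connected graph, and since
`adj(-A) * (-A) = det(-A) • 1` they satisfy `∑_{v ∼ w} m_v = -A_ww · m_w` for `w ≠ u`.

Writing `1 - t^m = -∏_{n ∣ m} Φ_n`, the product is `±∏_n Φ_n ^ e_n` with
`e_n = ∑ (δ_v - 2)` over `S_n = {v ∈ V_{1,u} : n ∣ m_v}`, so it suffices that every `e_n ≥ 0`.
By the linear relations no `w ∈ S_n \ {u}` has exactly one neighbour outside `S_n`, while `u`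
has at least `δ_{2,u} ≥ 2` of them. Counting each edge inside `S_n` at its endpoint farther from
`u` shows `∑_{S_n} δ_v = ∑_{S_n} (2·#(lower neighbours in S_n) + #(neighbours outside S_n))`,
and each summand is at least `2`.
-/

open Polynomial

theorem Finset.prod_zpow_eq_zpow_sum₀ {ι G₀ : Type*} [CommGroupWithZero G₀] {a : G₀} (ha : a ≠ 0)
    (s : Finset ι) (f : ι → ℤ) : ∏ i ∈ s, a ^ f i = a ^ ∑ i ∈ s, f i := by
  classical
  induction s using Finset.induction with
  | empty => simp
  | insert i s hi ih => rw [prod_insert hi, sum_insert hi, ih, zpow_add₀ ha]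

theorem Polynomial.one_sub_X_pow_eq_neg_prod_cyclotomic {m : ℕ} (hm : 0 < m) :
    (1 - X ^ m : ℤ[X]) = -∏ n ∈ m.divisors, cyclotomic n ℤ := by
  rw [prod_cyclotomic_eq_X_pow_sub_one hm, neg_sub]

theorem exists_polynomial_eq_prod_one_sub_X_pow_zpow {ι : Type*} (s : Finset ι) (m : ι → ℕ)
    (hm : ∀ i ∈ s, 0 < m i) (ε : ι → ℤ) (hε : ∀ n, 0 ≤ ∑ i ∈ s with n ∣ m i, ε i) :
    ∃ p : ℤ[X],
      ∏ i ∈ s, (1 - RatFunc.X ^ m i : RatFunc ℚ) ^ ε i =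
        algebraMap ℚ[X] (RatFunc ℚ) (p.map (Int.castRingHom ℚ)) ∧
      (p.natDegree : ℤ) = ∑ i ∈ s, ε i * m i := by
  classical
  let φ : ℤ[X] →+* RatFunc ℚ :=
    (algebraMap ℚ[X] (RatFunc ℚ)).comp (mapRingHom (Int.castRingHom ℚ))
  have hφ : Function.Injective φ :=
    (RatFunc.algebraMap_injective ℚ).comp (map_injective _ (RingHom.injective_int _))
  let N := s.biUnion fun i => (m i).divisors
  let e : ℕ → ℤ := fun n => ∑ i ∈ s with n ∣ m i, ε i
  have hN : ∀ i ∈ s, {n ∈ N | n ∣ m i} = (m i).divisors := fun i hi => by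
    ext n
    simp only [N, Finset.mem_filter, Finset.mem_biUnion, Nat.mem_divisors]
    exact ⟨fun h => ⟨h.2, (hm i hi).ne'⟩, fun h => ⟨⟨i, hi, h⟩, h.1⟩⟩
  have hswap : ∀ i n, i ∈ s ∧ n ∈ {n ∈ N | n ∣ m i} ↔ i ∈ {i ∈ s | n ∣ m i} ∧ n ∈ N := by
    simp only [Finset.mem_filter]
    tauto
  -- `e 1 = ∑ ε ≥ 0`, so the sign `(-1) ^ ∑ ε` can be written with a natural exponent
  let p : ℤ[X] := (-1) ^ (e 1).toNat * ∏ n ∈ N, cyclotomic n ℤ ^ (e n).toNat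
  refine ⟨p, ?_, ?_⟩
  · have hfactor : ∀ i ∈ s, (1 - RatFunc.X ^ m i : RatFunc ℚ) =
        -∏ n ∈ N with n ∣ m i, φ (cyclotomic n ℤ) := fun i hi => by
      rw [hN i hi, ← map_prod, ← map_neg, ← one_sub_X_pow_eq_neg_prod_cyclotomic (hm i hi)]
      simp [φ]
    have hcyc : ∀ n, φ (cyclotomic n ℤ) ≠ 0 := fun n =>
      (map_ne_zero_iff φ hφ).2 (cyclotomic_ne_zero n ℤ)
    calc ∏ i ∈ s, (1 - RatFunc.X ^ m i : RatFunc ℚ) ^ ε i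
        = ∏ i ∈ s, ((-1) ^ ε i * ∏ n ∈ N with n ∣ m i, φ (cyclotomic n ℤ) ^ ε i) :=
          Finset.prod_congr rfl fun i hi => by
            rw [hfactor i hi, neg_eq_neg_one_mul, mul_zpow, Finset.prod_zpow]
      _ = (-1) ^ e 1 * ∏ n ∈ N, φ (cyclotomic n ℤ) ^ e n := by
          rw [Finset.prod_mul_distrib, Finset.prod_zpow_eq_zpow_sum₀ (by norm_num),
            Finset.prod_comm' hswap]
          simp only [e, Nat.one_dvd, Finset.filter_true]
          congr 1
          exact Finset.prod_congr rfl fun n _ => Finset.prod_zpow_eq_zpow_sum₀ (hcyc n) _ _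
      _ = φ p := by
          simp only [p, map_mul, map_pow, map_neg, map_one, map_prod]
          rw [← zpow_natCast, Int.toNat_of_nonneg (hε 1)]
          congr 1
          exact Finset.prod_congr rfl fun n _ => by
            rw [← zpow_natCast, Int.toNat_of_nonneg (hε n)]
  · have hsign : p.natDegree = (∏ n ∈ N, cyclotomic n ℤ ^ (e n).toNat).natDegree := by
      simp [p, natDegree_mul, Finset.prod_ne_zero_iff, cyclotomic_ne_zero]
    rw [hsign, natDegree_prod _ _ fun n _ => pow_ne_zero _ (cyclotomic_ne_zero n ℤ)]
    simp only [natDegree_pow, natDegree_cyclotomic]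
    push_cast
    calc ∑ n ∈ N, ((e n).toNat : ℤ) * n.totient
        = ∑ n ∈ N, ∑ i ∈ s with n ∣ m i, ε i * n.totient :=
          Finset.sum_congr rfl fun n _ => by rw [Int.toNat_of_nonneg (hε n), Finset.sum_mul]
      _ = ∑ i ∈ s, ε i * ∑ n ∈ N with n ∣ m i, (n.totient : ℤ) := by
          rw [← Finset.sum_comm' hswap]
          simp only [Finset.mul_sum]
      _ = ∑ i ∈ s, ε i * m i := Finset.sum_congr rfl fun i hi => by
          rw [hN i hi, ← Nat.cast_sum, Nat.sum_totient]

section OrderedField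

variable {K V : Type*} [Field K] [LinearOrder K] [IsStrictOrderedRing K] [Fintype V]
  {M : Matrix V V K}

theorem Matrix.det_pos_of_dotProduct_mulVec_pos [DecidableEq V] (hM : M.IsSymm)
    (hpos : ∀ x : V → K, x ≠ 0 → 0 < x ⬝ᵥ M *ᵥ x) : 0 < M.det := by
  have : Invertible (2 : K) := invertibleOfNonzero two_ne_zero
  -- in a `toBilin' M`-orthogonal basis `c`, the Gram matrix `Pᵀ M P` is diagonal and positive
  obtain ⟨b, hb⟩ := LinearMap.BilinForm.exists_orthogonal_basis (B := toBilin' M)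
    (LinearMap.BilinForm.isSymm_iff.mp (Matrix.isSymm_toBilin'_iff_isSymm.mpr hM))
  let e := (finCongr (Module.finrank_fintype_fun_eq_card K)).trans (Fintype.equivFin V).symm
  let c := b.reindex e
  let P := (Pi.basisFun K V).toMatrix c
  have hdiag : Pᵀ * M * P = diagonal fun i => c i ⬝ᵥ M *ᵥ c i := by
    calc Pᵀ * M * P = Pᵀ * LinearMap.BilinForm.toMatrix (Pi.basisFun K V) (toBilin' M) * P := by
          rw [LinearMap.BilinForm.toMatrix_basisFun, LinearMap.BilinForm.toMatrix'_toBilin']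
      _ = LinearMap.BilinForm.toMatrix c (toBilin' M) :=
          LinearMap.BilinForm.toMatrix_mul_basis_toMatrix _ _ _
      _ = _ := by
          ext i j
          rw [LinearMap.BilinForm.toMatrix_apply, toBilin'_apply', diagonal_apply]
          split_ifs with hij
          · rw [hij]
          · rw [← toBilin'_apply', Module.Basis.reindex_apply, Module.Basis.reindex_apply]
            exact hb (e.symm.injective.ne hij)
  have hdet : P.det * P.det * M.det = ∏ i, c i ⬝ᵥ M *ᵥ c i := by
    rw [← det_diagonal, ← hdiag, det_mul, det_mul, det_transpose]; ring
  have hprod : 0 < ∏ i, c i ⬝ᵥ M *ᵥ c i := Finset.prod_pos fun i _ => hpos _ (c.ne_zero i)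
  rw [← hdet] at hprod
  exact pos_of_mul_pos_right hprod (mul_self_nonneg _)

theorem Matrix.nonneg_of_mulVec_nonneg (hoff : ∀ v w, v ≠ w → M v w ≤ 0)
    (hpos : ∀ x : V → K, x ≠ 0 → 0 < x ⬝ᵥ M *ᵥ x) {x : V → K} (hx : 0 ≤ M *ᵥ x) : 0 ≤ x := by
  have hdisj : ∀ v, x⁻ v * x⁺ v = 0 := fun v => by
    rcases le_total (x v) 0 with h | h
    · simp [posPart_eq_zero.2 h]
    · simp [negPart_eq_zero.2 h]
  have hcross : x⁻ ⬝ᵥ M *ᵥ x⁺ ≤ 0 := by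
    simp only [dotProduct, mulVec, Finset.mul_sum]
    refine Finset.sum_nonpos fun v _ => Finset.sum_nonpos fun w _ => ?_
    rw [mul_left_comm]
    rcases eq_or_ne v w with rfl | hvw
    · rw [hdisj, mul_zero]
    · exact mul_nonpos_of_nonpos_of_nonneg (hoff v w hvw)
        (mul_nonneg (negPart_nonneg x v) (posPart_nonneg x w))
  have hquad : x⁻ ⬝ᵥ M *ᵥ x⁻ ≤ 0 := by
    have hneg : x⁻ = x⁺ - x := (sub_eq_of_eq_add (eq_add_of_sub_eq' (posPart_sub_negPart x))).symm
    nth_rewrite 2 [hneg]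
    rw [mulVec_sub, dotProduct_sub]
    exact sub_nonpos_of_le (hcross.trans (dotProduct_nonneg_of_nonneg (negPart_nonneg x) hx))
  have hneg0 : x⁻ = 0 := by
    by_contra hne
    exact (hpos _ hne).not_ge hquad
  exact negPart_eq_zero.1 hneg0

theorem Matrix.pos_of_mulVec_eq_single [DecidableEq V] (G : SimpleGraph V) (hG : G.Connected)
    (hoff : ∀ v w, v ≠ w → M v w ≤ 0) (hadj : ∀ v w, G.Adj v w → M v w < 0)
    (hpos : ∀ x : V → K, x ≠ 0 → 0 < x ⬝ᵥ M *ᵥ x) {u : V} {x : V → K}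
    (hx : M *ᵥ x = Pi.single u 1) (v : V) : 0 < x v := by
  have hx0 : 0 ≤ x := nonneg_of_mulVec_nonneg hoff hpos (hx ▸ Pi.single_nonneg.2 zero_le_one)
  -- zeros of `x` spread along edges and avoid `u`: at a zero `v`, `(M x) v` is a sum of
  -- nonpositive terms
  have hzero : ∀ v, x v = 0 → v ≠ u ∧ ∀ w, G.Adj v w → x w = 0 := by
    intro v hv
    have hterms : ∀ w ∈ Finset.univ.erase v, M v w * x w ≤ 0 := fun w hw =>
      mul_nonpos_of_nonpos_of_nonneg (hoff v w (Finset.ne_of_mem_erase hw).symm) (hx0 w)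
    have hrow : (M *ᵥ x) v = ∑ w ∈ Finset.univ.erase v, M v w * x w := by
      rw [mulVec, dotProduct, ← Finset.add_sum_erase _ _ (Finset.mem_univ v), hv, mul_zero,
        zero_add]
    have hvu : v ≠ u := by
      rintro rfl
      have := Finset.sum_nonpos hterms
      rw [← hrow, hx, Pi.single_eq_same] at this
      exact absurd this (by norm_num)
    refine ⟨hvu, fun w hvw => ?_⟩
    have hsum : ∑ w ∈ Finset.univ.erase v, M v w * x w = 0 := by
      rw [← hrow, hx, Pi.single_eq_of_ne hvu]
    have := (Finset.sum_eq_zero_iff_of_nonpos hterms).1 hsum w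
      (Finset.mem_erase.2 ⟨hvw.ne.symm, Finset.mem_univ w⟩)
    exact (mul_eq_zero.1 this).resolve_left (hadj v w hvw).ne
  have hwalk : ∀ {a b : V}, G.Walk a b → x a = 0 → x b = 0 := by
    intro a b p
    induction p with
    | nil => exact id
    | cons h _ ih => exact fun ha => ih ((hzero _ ha).2 _ h)
  refine (hx0 v).lt_of_ne fun hv => ?_
  obtain ⟨p⟩ := hG.preconnected v u
  exact (hzero u (hwalk p hv.symm)).1 rfl

end OrderedField

namespace SimpleGraph

open Finset

variable {V : Type*} {G : SimpleGraph V}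

theorem Reachable.exists_walk_support_subset {s : Set V} {a b : s}
    (h : (G.induce s).Reachable a b) : ∃ p : G.Walk a b, ∀ x ∈ p.support, x ∈ s := by
  obtain ⟨q⟩ := h
  refine ⟨q.map (Embedding.induce s).toHom, fun x hx => ?_⟩
  have hx' : x ∈ q.support.map (Embedding.induce (G := G) s).toHom := by
    rw [← Walk.support_map]; exact hx
  obtain ⟨y, -, rfl⟩ := List.mem_map.1 hx'
  exact y.2

/-- In a forest, a connected component of the complement of a connected set `X` is joined to `X`
at a single vertex. -/
theorem IsAcyclic.eq_of_adj_of_reachable_compl (hG : G.IsAcyclic) {X : Set V}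
    (hX : (G.induce X).Preconnected) {a b a' b' : V} (ha : a ∈ X) (ha' : a' ∈ X) (hb : b ∉ X)
    (hb' : b' ∉ X) (hab : G.Adj a b) (hab' : G.Adj a' b')
    (hbb' : (G.induce Xᶜ).Reachable ⟨b', hb'⟩ ⟨b, hb⟩) : a = a' := by
  by_contra hne
  obtain ⟨p, hp⟩ := (hX ⟨a, ha⟩ ⟨a', ha'⟩).exists_walk_support_subset
  obtain ⟨q, hq⟩ := hbb'.exists_walk_support_subset
  -- `s(a, b)` is a bridge, yet the walk `a ⇝ a'`, `a' - b'`, `b' ⇝ b` through `X` and `Xᶜ` avoids it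
  have hmem := isBridge_iff_forall_walk_mem_edges.1
    (isAcyclic_iff_forall_adj_isBridge.1 hG hab) (p.append (q.cons hab'))
  rw [Walk.edges_append, Walk.edges_cons] at hmem
  rcases List.mem_append.1 hmem with h | h
  · exact hb (hp _ (p.snd_mem_support_of_mem_edges h))
  rcases List.mem_cons.1 h with h | h
  · rcases Sym2.eq_iff.1 h with ⟨h1, -⟩ | ⟨-, h2⟩
    · exact hne h1
    · exact hb (h2 ▸ ha')
  · exact hq _ (q.fst_mem_support_of_mem_edges h) ha

theorem Connected.exists_adj_dist_lt (hG : G.Connected) {u v : V} (hvu : v ≠ u) :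
    ∃ w, G.Adj v w ∧ G.dist u w < G.dist u v := by
  obtain ⟨p, hp⟩ := hG.exists_walk_length_eq_dist v u
  cases p with
  | nil => exact absurd rfl hvu
  | cons h q =>
    refine ⟨_, h, ?_⟩
    rw [dist_comm, dist_comm (u := u), ← hp, Walk.length_cons]
    exact Nat.lt_succ_of_le (dist_le q)

variable [Fintype V] [DecidableEq V] [DecidableRel G.Adj]

/-- `d` is a height function with `u` as its only local minimum and no edge between vertices of
equal height (e.g. the distance from `u` in a tree). -/
theorem sum_degree_sub_two_nonneg (d : V → ℕ) (u : V) (hne : ∀ v w, G.Adj v w → d v ≠ d w)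
    (hdesc : ∀ v ≠ u, ∃ w, G.Adj v w ∧ d w < d v) (S : Finset V)
    (hS : ∀ v ∈ S, v ≠ u → #{w ∈ G.neighborFinset v | w ∉ S} ≠ 1)
    (hu : u ∈ S → 2 ≤ #{w ∈ G.neighborFinset u | w ∉ S}) :
    0 ≤ ∑ v ∈ S, ((G.degree v : ℤ) - 2) := by
  let out v := #{w ∈ G.neighborFinset v | w ∉ S}
  let below v := #{w ∈ S | G.Adj v w ∧ d w < d v}
  have hdeg : ∀ v, G.degree v = below v + #{w ∈ S | G.Adj v w ∧ d v < d w} + out v := fun v => by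
    rw [← card_neighborFinset_eq_degree, ← Finset.card_filter_add_card_filter_not (· ∈ S)]
    congr 1
    rw [← Finset.card_filter_add_card_filter_not (fun w => d w < d v), Finset.filter_filter,
      Finset.filter_filter]
    congr 1 <;> congr 1 <;> ext w <;> simp only [Finset.mem_filter, mem_neighborFinset]
    · tauto
    · constructor
      · rintro ⟨hvw, hw, hlt⟩
        exact ⟨hw, hvw, (Nat.lt_or_gt_of_ne (hne v w hvw)).resolve_right hlt⟩
      · rintro ⟨hw, hvw, hlt⟩
        exact ⟨hvw, hw, hlt.not_gt⟩
  -- an edge inside `S` is counted once from each endpoint: as going up, and as going down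
  have hswap : ∑ v ∈ S, #{w ∈ S | G.Adj v w ∧ d v < d w} = ∑ v ∈ S, below v := by
    simp only [below, Finset.card_eq_sum_ones, Finset.sum_filter]
    rw [Finset.sum_comm]
    simp only [G.adj_comm]
  have hlocal : ∀ v ∈ S, 2 ≤ 2 * below v + out v := fun v hv => by
    rcases eq_or_ne v u with rfl | hvu
    · exact (hu hv).trans (Nat.le_add_left _ _)
    obtain ⟨w, hvw, hlt⟩ := hdesc v hvu
    by_cases hw : w ∈ S
    · have : 0 < below v := Finset.card_pos.2 ⟨w, Finset.mem_filter.2 ⟨hw, hvw, hlt⟩⟩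
      omega
    · have : 0 < out v :=
        Finset.card_pos.2 ⟨w, Finset.mem_filter.2 ⟨(G.mem_neighborFinset v w).2 hvw, hw⟩⟩
      have : out v ≠ 1 := hS v hv hvu
      omega
  have hsum : ∑ v ∈ S, G.degree v = ∑ v ∈ S, (2 * below v + out v) := by
    simp only [hdeg, Finset.sum_add_distrib, hswap, ← Finset.mul_sum]
    ring
  have : ∑ v ∈ S, 2 ≤ ∑ v ∈ S, G.degree v := hsum ▸ Finset.sum_le_sum hlocal
  rw [Finset.sum_sub_distrib, sub_nonneg]
  exact_mod_cast this

end SimpleGraph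

namespace Plumbing

section Graph

variable {V : Type*} {G : SimpleGraph V} {V2 : Set V} {u v : V}

theorem deg_eq_degree [Fintype V] [DecidableRel G.Adj] : deg G v = G.degree v := by
  rw [deg, Set.ncard_eq_toFinset_card', Set.toFinset_card, SimpleGraph.card_neighborSet_eq_degree]

theorem not_mem_of_mem_V1u (hv : v ∈ V1u G V2 u) (hvu : v ≠ u) : v ∉ V2 :=
  (hv.resolve_left hvu).1

theorem mem_V1u_of_adj (hG : G.IsAcyclic) (hV2 : (G.induce V2).Preconnected) (hu : u ∈ V2)
    (hv : v ∈ V1u G V2 u) (hvu : v ≠ u) {w : V} (hvw : G.Adj v w) : w ∈ V1u G V2 u := by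
  obtain ⟨hvc, w0, hw0, huw0, hcomp⟩ := hv.resolve_left hvu
  by_cases hw : w ∈ V2
  · rw [← hG.eq_of_adj_of_reachable_compl hV2 hu hw hw0 hvc huw0 hvw.symm
      (SimpleGraph.ConnectedComponent.exact hcomp)]
    exact Set.mem_insert u _
  · exact Or.inr ⟨hw, w0, hw0, huw0, (SimpleGraph.ConnectedComponent.sound
      (SimpleGraph.induce_adj.2 hvw.symm).reachable).trans hcomp⟩

end Graph

variable {V : Type*} [Fintype V] [DecidableEq V]

theorem mapMatrix_neg (A : Matrix V V ℤ) : (Int.castRingHom ℚ).mapMatrix (-A) = -Aq A := by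
  ext v w
  simp [Aq]

theorem cast_det_neg (A : Matrix V V ℤ) : ((-A).det : ℚ) = (-Aq A).det := by
  rw [← mapMatrix_neg, ← RingHom.map_det]; rfl

omit [DecidableEq V] in
theorem NegDef.dotProduct_neg_mulVec_pos {A : Matrix V V ℤ} (hneg : NegDef A) (x : V → ℚ)
    (hx : x ≠ 0) : 0 < x ⬝ᵥ (-Aq A) *ᵥ x := by
  rw [neg_mulVec, dotProduct_neg, neg_pos]
  exact hneg x hx

theorem det_neg_Aq_pos {A : Matrix V V ℤ} (hA : A.IsSymm) (hneg : NegDef A) :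
    0 < (-Aq A).det :=
  det_pos_of_dotProduct_mulVec_pos (hA.map _).neg hneg.dotProduct_neg_mulVec_pos

theorem Estar_apply {A : Matrix V V ℤ} (hdet : (-Aq A).det ≠ 0) (u v : V) :
    Estar A u v = (-Aq A)⁻¹ v u := by
  have : (Aq A)⁻¹ = -(-Aq A)⁻¹ :=
    inv_eq_left_inv (by rw [← neg_mul_neg, neg_neg, nonsing_inv_mul _ (isUnit_iff_ne_zero.2 hdet)])
  rw [Estar, this, neg_neg]

theorem neg_Aq_mulVec_Estar {A : Matrix V V ℤ} (hdet : (-Aq A).det ≠ 0) (u : V) :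
    (-Aq A) *ᵥ Estar A u = Pi.single u 1 := by
  have : Estar A u = (-Aq A)⁻¹ *ᵥ Pi.single u 1 := by
    ext w; simp [Estar_apply hdet, mulVec_single]
  rw [this, mulVec_mulVec, mul_nonsing_inv _ (isUnit_iff_ne_zero.2 hdet), one_mulVec]

theorem Estar_symm {A : Matrix V V ℤ} (hA : A.IsSymm) (u v : V) : Estar A v u = Estar A u v := by
  have hinv : (Aq A)⁻¹.IsSymm := (hA.map _).inv
  rw [Estar, Estar, neg_apply, neg_apply, hinv.apply]

theorem det_mul_Estar {A : Matrix V V ℤ} (hdet : (-Aq A).det ≠ 0) (u v : V) :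
    ((-A).det : ℚ) * Estar A v u = (-A).adjugate u v := by
  have hadj : ((-A).adjugate u v : ℚ) = (-Aq A).adjugate u v := by
    rw [← mapMatrix_neg, ← RingHom.map_adjugate]; rfl
  rw [hadj, cast_det_neg, Estar_apply hdet, Matrix.inv_def, Matrix.smul_apply, smul_eq_mul,
    ← mul_assoc, Ring.mul_inverse_cancel _ (isUnit_iff_ne_zero.2 hdet), one_mul]

theorem Estar_pos (G : SimpleGraph V) (hG : G.Connected) {A : Matrix V V ℤ}
    (hAadj : ∀ v w : V, v ≠ w → A v w = if G.Adj v w then 1 else 0) (hneg : NegDef A)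
    (hdet : (-Aq A).det ≠ 0) (u w : V) : 0 < Estar A u w := by
  have hoff : ∀ v w, v ≠ w → (-Aq A) v w = if G.Adj v w then -1 else 0 := fun v w hvw => by
    simp [Aq, hAadj v w hvw, apply_ite]
  refine pos_of_mulVec_eq_single G hG (fun v w hvw => ?_) (fun v w hvw => ?_)
    hneg.dotProduct_neg_mulVec_pos (neg_Aq_mulVec_Estar hdet u) w
  · rw [hoff v w hvw]; split_ifs <;> norm_num
  · rw [hoff v w hvw.ne, if_pos hvw]; norm_num

theorem sum_adjugate_neighborFinset (G : SimpleGraph V) [DecidableRel G.Adj] {A : Matrix V V ℤ}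
    (hAadj : ∀ v w : V, v ≠ w → A v w = if G.Adj v w then 1 else 0) {u w : V} (hwu : w ≠ u) :
    ∑ v ∈ G.neighborFinset w, (-A).adjugate u v = -(A w w * (-A).adjugate u w) := by
  have hrow : ∑ v, (-A).adjugate u v * A v w = 0 := by
    have := congrFun (congrFun (adjugate_mul (-A)) u) w
    rw [mul_apply, Matrix.smul_apply, one_apply_ne hwu.symm, smul_zero] at this
    simpa only [neg_apply, mul_neg, Finset.sum_neg_distrib, neg_eq_zero] using this
  have hoff : ∑ v ∈ Finset.univ.erase w, (-A).adjugate u v * A v w =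
      ∑ v ∈ G.neighborFinset w, (-A).adjugate u v := by
    rw [← Finset.sum_subset (fun v hv => Finset.mem_erase.2
        ⟨(G.ne_of_adj ((G.mem_neighborFinset w v).1 hv)).symm, Finset.mem_univ v⟩) ?_]
    · refine Finset.sum_congr rfl fun v hv => ?_
      have hwv := (G.mem_neighborFinset w v).1 hv
      rw [hAadj v w (G.ne_of_adj hwv).symm, if_pos hwv.symm, mul_one]
    · intro v hv hvN
      rw [hAadj v w (Finset.ne_of_mem_erase hv),
        if_neg fun h => hvN ((G.mem_neighborFinset w v).2 h.symm), mul_zero]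
  rw [← Finset.add_sum_erase _ _ (Finset.mem_univ w), hoff] at hrow
  linear_combination hrow

theorem sum_deg_sub_two_filter_dvd_nonneg {G : SimpleGraph V} [DecidableRel G.Adj]
    (hG : G.IsTree) {V2 : Set V} (hV2 : (G.induce V2).Connected) {u : V} (hu : u ∈ V2)
    (hδ2 : 2 ≤ (G.neighborSet u ∩ V2).ncard) (m : V → ℕ)
    (hdvd : ∀ w ≠ u, m w ∣ ∑ v ∈ G.neighborFinset w, m v) (n : ℕ) :
    0 ≤ ∑ v ∈ (V1u G V2 u).toFinset with n ∣ m v, ((deg G v : ℤ) - 2) := by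
  set S := {v ∈ (V1u G V2 u).toFinset | n ∣ m v}
  have hS : ∀ {v}, v ∈ S ↔ v ∈ V1u G V2 u ∧ n ∣ m v := by simp [S]
  simp only [deg_eq_degree]
  refine G.sum_degree_sub_two_nonneg (G.dist u) u (fun v w h => hG.dist_ne_of_adj u h)
    (fun v hv => hG.connected.exists_adj_dist_lt hv) S (fun w hw hwu hcard => ?_) fun _ => ?_
  · obtain ⟨v0, hv0⟩ := Finset.card_eq_one.1 hcard
    obtain ⟨hwv0, hv0S⟩ := Finset.mem_filter.1 (hv0 ▸ Finset.mem_singleton_self v0)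
    have hsplit := Finset.sum_filter_add_sum_filter_not (G.neighborFinset w) (· ∈ S) m
    rw [hv0, Finset.sum_singleton] at hsplit
    have hin : n ∣ ∑ v ∈ G.neighborFinset w with v ∈ S, m v :=
      Finset.dvd_sum fun v hv => (hS.1 (Finset.mem_filter.1 hv).2).2
    have hv0dvd : n ∣ m v0 :=
      (Nat.dvd_add_right hin).1 (hsplit ▸ (hS.1 hw).2.trans (hdvd w hwu))
    exact hv0S (hS.2 ⟨mem_V1u_of_adj hG.isAcyclic hV2.preconnected hu (hS.1 hw).1 hwu
      ((G.mem_neighborFinset w v0).1 hwv0), hv0dvd⟩)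
  · calc 2 ≤ (G.neighborSet u ∩ V2).ncard := hδ2
      _ ≤ (({v ∈ G.neighborFinset u | v ∉ S} : Finset V) : Set V).ncard := by
          refine Set.ncard_le_ncard (fun v ⟨huv, hv⟩ => ?_) (Set.toFinite _)
          refine Finset.mem_filter.2 ⟨(G.mem_neighborFinset u v).2 huv, fun hvS => ?_⟩
          exact not_mem_of_mem_V1u (hS.1 hvS).1 (G.ne_of_adj huv).symm hv
      _ = _ := Set.ncard_coe_finset _

end Plumbing

theorem statement8_general (V : Type) [Fintype V] [DecidableEq V]
    (G : SimpleGraph V) (hG : G.IsTree)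
    (A : Matrix V V ℤ) (hAsymm : A.IsSymm)
    (hAadj : ∀ v w : V, v ≠ w → A v w = if G.Adj v w then 1 else 0)
    (hAneg : NegDef A)
    (V2 : Set V) (hV2conn : (G.induce V2).Connected)
    (u : V) (huV2 : u ∈ V2)
    (hδ2 : 2 ≤ (G.neighborSet u ∩ V2).ncard) :
    ∃ m : V → ℕ,
      (∀ v ∈ V1u G V2 u, (m v : ℚ) = (((-A).det : ℤ) : ℚ) * Estar A v u) ∧
      (∀ v ∈ V1u G V2 u, 0 < m v) ∧
      ∃ p : Polynomial ℤ,
        (∏ᶠ v ∈ V1u G V2 u,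
            ((1 : RatFunc ℚ) - RatFunc.X ^ (m v)) ^ ((deg G v : ℤ) - 2))
          = algebraMap (Polynomial ℚ) (RatFunc ℚ) (p.map (Int.castRingHom ℚ)) ∧
        (p.natDegree : ℤ) = ∑ᶠ v ∈ V1u G V2 u, ((deg G v : ℤ) - 2) * (m v : ℤ) := by
  have hdet := det_neg_Aq_pos hAsymm hAneg
  have hadj : ∀ v, 0 < (-A).adjugate u v := fun v => by
    have h := det_mul_Estar hdet.ne' u v
    rw [Estar_symm hAsymm, cast_det_neg] at h
    exact_mod_cast h ▸ mul_pos hdet (Estar_pos G hG.connected hAadj hAneg hdet.ne' u v)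
  let m : V → ℕ := fun v => ((-A).adjugate u v).toNat
  have hm : ∀ v, (m v : ℤ) = (-A).adjugate u v := fun v => Int.toNat_of_nonneg (hadj v).le
  have hmpos : ∀ v, 0 < m v := fun v => by have := hm v; have := hadj v; omega
  have hdvd : ∀ w ≠ u, m w ∣ ∑ v ∈ G.neighborFinset w, m v := fun w hwu => by
    rw [← Int.natCast_dvd_natCast, Nat.cast_sum]
    simp only [hm, sum_adjugate_neighborFinset G hAadj hwu]
    exact (dvd_mul_left _ _).neg_right
  obtain ⟨p, hp, hpdeg⟩ := exists_polynomial_eq_prod_one_sub_X_pow_zpow (V1u G V2 u).toFinset m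
    (fun v _ => hmpos v) _ (sum_deg_sub_two_filter_dvd_nonneg hG hV2conn huV2 hδ2 m hdvd)
  refine ⟨m, fun v _ => ?_, fun v _ => hmpos v, p, ?_, ?_⟩
  · rw [det_mul_Estar hdet.ne', ← hm]; norm_cast
  · rwa [← Set.coe_toFinset (V1u G V2 u), finprod_mem_coe_finset]
  · rwa [← Set.coe_toFinset (V1u G V2 u), finsum_mem_coe_finset]

/-- for a boundary vertex `u` with `δ_{2,u} ≥ 2`, the multiplicities
`m_v = det(−A)·(E*_v)_u`, `v ∈ V_{1,u}`, are positive integers and the zeta function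
`Π_{v ∈ V_{1,u}} (1 − t^{m_v})^{δ_v − 2}` is a polynomial with integer coefficients of
degree `Σ_{v ∈ V_{1,u}} (δ_v − 2)·m_v`. -/
theorem statement8 (V : Type) [Fintype V] [DecidableEq V]
    (G : SimpleGraph V) (hG : G.IsTree)
    (A : Matrix V V ℤ) (hAsymm : A.IsSymm)
    (hAadj : ∀ v w : V, v ≠ w → A v w = if G.Adj v w then 1 else 0)
    (hAneg : NegDef A)
    (V2 : Set V) (hV2conn : (G.induce V2).Connected)
    (u : V) (huV2 : u ∈ V2) (hubd : ∃ w, w ∉ V2 ∧ G.Adj u w)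
    (hδ2 : 2 ≤ (G.neighborSet u ∩ V2).ncard) :
    ∃ m : V → ℕ,
      (∀ v ∈ V1u G V2 u, (m v : ℚ) = (((-A).det : ℤ) : ℚ) * Estar A v u) ∧
      (∀ v ∈ V1u G V2 u, 0 < m v) ∧
      ∃ p : Polynomial ℤ,
        (∏ᶠ v ∈ V1u G V2 u,
            ((1 : RatFunc ℚ) - RatFunc.X ^ (m v)) ^ ((deg G v : ℤ) - 2))
          = algebraMap (Polynomial ℚ) (RatFunc ℚ) (p.map (Int.castRingHom ℚ)) ∧
        (p.natDegree : ℤ) = ∑ᶠ v ∈ V1u G V2 u, ((deg G v : ℤ) - 2) * (m v : ℤ) :=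
  statement8_general V G hG A hAsymm hAadj hAneg V2 hV2conn u huV2 hδ2
end
end

section
/- Let M be the V_2×V_2 matrix whose (w,v) entry is (A^{-1})_{wv} for w,v ∈ V_2 (equivalently, whose columns are the vectors −E*_v|_{V_2}, v ∈ V_2). Then M is invertible, M^{-1} is symmetric and negative definite, and M^{-1} agrees with the principal submatrix (A_{wv})_{w,v∈V_2} in every off-diagonal entry and in every diagonal entry indexed by a vertex of V_2 \ B; i.e., M^{-1} is a modified intersection form of the subgraph on V_2, modified at most in the diagonal entries indexed by the boundary B. -/
open Matrix

open scoped Classical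

noncomputable section

open Plumbing

/-!
Split the vertices into `V₂` and its complement `V₁`. By the Schur complement formula, the
`V₂`-block of `A⁻¹` is the inverse of `A₂₂ - A₂₁ A₁₁⁻¹ A₁₂`, and negative definiteness passes to
inverses and principal submatrices. The correction `A₂₁ A₁₁⁻¹ A₁₂` has `(w, v)`-entry a sum over
neighbours `a` of `w` and `b` of `v` outside `V₂` of `(A₁₁⁻¹)_{ab}`, which vanishes unless `a` and
`b` lie in the same component of the graph on `V₁`. For `w ≠ v` such a component would close a cycle
with a path from `v` to `w` inside the connected set `V₂`; for `w = v` there is no such neighbour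
unless `v` is a boundary vertex.
-/

namespace SimpleGraph

variable {V : Type*} {G : SimpleGraph V}

def induceHomDeleteEdge (T : Set V) {u v : V} (huv : ¬ (u ∈ T ∧ v ∈ T)) :
    G.induce T →g G.deleteEdges {s(u, v)} where
  toFun := Subtype.val
  map_rel' {x y} h := by
    refine (deleteEdges_adj ..).2 ⟨h, ?_⟩
    rw [Set.mem_singleton_iff, Sym2.eq_iff]
    rintro (⟨rfl, rfl⟩ | ⟨rfl, rfl⟩)
    exacts [huv ⟨x.2, y.2⟩, huv ⟨y.2, x.2⟩]

theorem IsAcyclic.not_reachable_induce_compl (hG : G.IsAcyclic) {S : Set V} {w v a b : V}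
    (hw : w ∈ S) (hv : v ∈ S) (hwv : w ≠ v) (hS : (G.induce S).Reachable ⟨w, hw⟩ ⟨v, hv⟩)
    (ha : a ∉ S) (hb : b ∉ S) (hwa : G.Adj w a) (hbv : G.Adj b v) :
    ¬ (G.induce Sᶜ).Reachable ⟨a, ha⟩ ⟨b, hb⟩ := by
  intro hSc
  -- `s(w, a)` is a bridge, yet the walk `w ⇝ v — b ⇝ a` avoids it
  refine isAcyclic_iff_forall_adj_isBridge.1 hG hwa ?_
  have hvb : (G.deleteEdges {s(w, a)}).Adj v b := by
    refine (deleteEdges_adj ..).2 ⟨hbv.symm, ?_⟩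
    rw [Set.mem_singleton_iff, Sym2.eq_iff]
    rintro (⟨h, -⟩ | ⟨h, -⟩)
    exacts [hwv h.symm, ha (h ▸ hv)]
  exact ((hS.map (induceHomDeleteEdge S fun h => ha h.2)).trans hvb.reachable).trans
    (hSc.map (induceHomDeleteEdge Sᶜ fun h => h.1 hw)).symm

end SimpleGraph

namespace Matrix

theorem neg_posDef_iff {n R : Type*} [Fintype n] [CommRing R] [PartialOrder R] [IsOrderedRing R]
    [StarRing R] [TrivialStar R] {M : Matrix n n R} :
    (-M).PosDef ↔ M.IsSymm ∧ ∀ x : n → R, x ≠ 0 → x ⬝ᵥ M *ᵥ x < 0 := by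
  simp [posDef_iff_dotProduct_mulVec, isSymm_neg_iff, neg_mulVec, dotProduct_neg]

variable {ι K : Type*} [Fintype ι] [DecidableEq ι] [Field K]

protected theorem inv_neg (M : Matrix ι ι K) : (-M)⁻¹ = -M⁻¹ := by
  by_cases h : IsUnit M.det
  · exact inv_eq_left_inv (by rw [neg_mul_neg, nonsing_inv_mul _ h])
  · have h' : ¬IsUnit (-M).det := by simpa [det_neg, IsUnit.mul_iff] using h
    rw [nonsing_inv_apply_not_isUnit _ h', nonsing_inv_apply_not_isUnit _ h, neg_zero]

theorem inv_apply_eq_zero_of_not_reachable (H : SimpleGraph ι) {N : Matrix ι ι K}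
    (hN : ∀ a b, a ≠ b → ¬ H.Adj a b → N a b = 0) {a b : ι} (hab : ¬ H.Reachable a b) :
    N⁻¹ a b = 0 := by
  have hsupp : ∀ c e, N c e ≠ 0 → H.Reachable c e := fun c e h => by
    by_cases hce : c = e
    · exact hce ▸ .refl c
    · by_contra hr
      exact h (hN c e hce fun hadj => hr hadj.reachable)
  let R : Matrix ι ι K := of fun c d => if H.Reachable c d then 1 else 0
  -- `N` is block diagonal along the components of `H`, so it commutes with masking by `R`
  have hmask : ∀ X : Matrix ι ι K, N * (X ⊙ R) = (N * X) ⊙ R := fun X => by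
    ext c d
    simp only [mul_apply, hadamard_apply, Finset.sum_mul]
    refine Finset.sum_congr rfl fun e _ => ?_
    by_cases hce : N c e = 0
    · simp [hce]
    · have : H.Reachable e d ↔ H.Reachable c d :=
        ⟨(hsupp c e hce).trans, (hsupp c e hce).symm.trans⟩
      simp [R, this]
  by_cases hdet : IsUnit N.det
  · have hright : N * (N⁻¹ ⊙ R) = 1 := by
      rw [hmask, mul_nonsing_inv _ hdet]
      ext c d
      by_cases hcd : c = d <;> simp [R, one_apply, hcd]
    rw [inv_eq_right_inv hright]
    simp [R, hab]
  · simp [nonsing_inv_apply_not_isUnit _ hdet]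

theorem inv_toBlocks₁₁_inv_fromBlocks {m n : Type*} [Fintype m] [DecidableEq m] [Fintype n]
    [DecidableEq n] {A : Matrix m m K} {B : Matrix m n K} {C : Matrix n m K} {D : Matrix n n K}
    (hM : IsUnit (fromBlocks A B C D).det) (hD : IsUnit D.det) :
    ((fromBlocks A B C D)⁻¹.toBlocks₁₁)⁻¹ = A - B * D⁻¹ * C := by
  let := invertibleOfIsUnitDet _ hM
  let := invertibleOfIsUnitDet _ hD
  let := invertibleOfFromBlocks₂₂Invertible A B C D
  rw [← invOf_eq_nonsing_inv (fromBlocks A B C D), invOf_fromBlocks₂₂_eq, toBlocks_fromBlocks₁₁,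
    invOf_eq_nonsing_inv, inv_inv_of_invertible, invOf_eq_nonsing_inv]

/- The type ascriptions are needed: without them the products elaborate with the
multiplication instance of the type synonym `CStarMatrix`. -/
def schurComplement (N : Matrix ι ι K) (s : Set ι) [DecidablePred (· ∈ s)] :
    Matrix s s K :=
  N.submatrix Subtype.val Subtype.val -
    (N.submatrix Subtype.val Subtype.val : Matrix s ↥sᶜ K) *
      (N.submatrix Subtype.val Subtype.val : Matrix ↥sᶜ ↥sᶜ K)⁻¹ *
        (N.submatrix Subtype.val Subtype.val : Matrix ↥sᶜ s K)

theorem inv_submatrix_inv_eq_schurComplement {N : Matrix ι ι K} (s : Set ι)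
    [DecidablePred (· ∈ s)] (hN : IsUnit N.det)
    (hc : IsUnit (N.submatrix Subtype.val Subtype.val : Matrix ↥sᶜ ↥sᶜ K).det) :
    ((N⁻¹).submatrix Subtype.val Subtype.val : Matrix s s K)⁻¹ = schurComplement N s := by
  let e := Equiv.Set.sumCompl s
  have hblocks : N.submatrix e e = fromBlocks (N.submatrix Subtype.val Subtype.val)
      (N.submatrix Subtype.val Subtype.val) (N.submatrix Subtype.val Subtype.val)
      (N.submatrix Subtype.val Subtype.val) := by
    ext (i | i) (j | j) <;> rfl
  have hdet : IsUnit (N.submatrix e e).det := by rwa [det_submatrix_equiv_self]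
  have h := inv_toBlocks₁₁_inv_fromBlocks (hblocks ▸ hdet) hc
  rwa [← hblocks, inv_submatrix_equiv] at h

variable {G : SimpleGraph ι} {N : Matrix ι ι K} {s : Set ι} [DecidablePred (· ∈ s)]

theorem schurComplement_apply_eq_of_forall (hN : ∀ a b, a ≠ b → ¬ G.Adj a b → N a b = 0)
    {w v : s} (h : ∀ a b : ↥sᶜ, G.Adj w a → G.Adj b v →
      (N.submatrix Subtype.val Subtype.val : Matrix ↥sᶜ ↥sᶜ K)⁻¹ a b = 0) :
    schurComplement N s w v = N w v := by
  have hcross : ∀ (x : s) (a : ↥sᶜ), (x : ι) ≠ a := fun x a hxa => a.2 (hxa ▸ x.2)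
  suffices hzero : ∀ a b : ↥sᶜ,
      N w a * (N.submatrix Subtype.val Subtype.val : Matrix ↥sᶜ ↥sᶜ K)⁻¹ a b * N b v = 0 by
    rw [schurComplement, sub_apply, submatrix_apply, sub_eq_self, mul_apply]
    exact Finset.sum_eq_zero fun b _ => by
      rw [mul_apply, Finset.sum_mul]
      exact Finset.sum_eq_zero fun a _ => hzero a b
  intro a b
  by_cases hwa : G.Adj w a
  · by_cases hbv : G.Adj b v
    · simp [h a b hwa hbv]
    · simp [hN b v (hcross v b).symm hbv]
  · simp [hN w a (hcross w a) hwa]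

theorem schurComplement_apply_of_ne (hG : G.IsAcyclic)
    (hN : ∀ a b, a ≠ b → ¬ G.Adj a b → N a b = 0) (hs : (G.induce s).Preconnected)
    {w v : s} (hwv : w ≠ v) : schurComplement N s w v = N w v := by
  refine schurComplement_apply_eq_of_forall hN fun a b hwa hbv => ?_
  refine inv_apply_eq_zero_of_not_reachable (G.induce sᶜ) (fun c d hcd hadj => ?_) ?_
  · exact hN c d (Subtype.coe_ne_coe.2 hcd) (by simpa using hadj)
  · exact hG.not_reachable_induce_compl w.2 v.2 (Subtype.coe_ne_coe.2 hwv) (hs w v) a.2 b.2 hwa hbv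

theorem schurComplement_apply_self (hN : ∀ a b, a ≠ b → ¬ G.Adj a b → N a b = 0) {v : s}
    (hv : ∀ a ∉ s, ¬ G.Adj v a) : schurComplement N s v v = N v v :=
  schurComplement_apply_eq_of_forall hN fun a _ hva _ => absurd hva (hv a a.2)

end Matrix

/-- the matrix of the restrictions `−E*_v|_{V₂}` is the inverse of a
negative definite symmetric matrix which is a modification of the intersection form of
the full subgraph on `V₂` along the diagonal entries of the boundary. -/
theorem statement9 (V : Type) [Fintype V] [DecidableEq V]
    (G : SimpleGraph V) (hG : G.IsTree)
    (A : Matrix V V ℤ) (hAsymm : A.IsSymm)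
    (hAadj : ∀ v w : V, v ≠ w → A v w = if G.Adj v w then 1 else 0)
    (hAneg : NegDef A)
    (V2 : Set V) (hV2conn : (G.induce V2).Connected)
    (M : Matrix V2 V2 ℚ)
    (hM : M = ((Aq A)⁻¹).submatrix Subtype.val Subtype.val) :
    IsUnit M ∧ (M⁻¹).IsSymm ∧
    (∀ x : V2 → ℚ, x ≠ 0 → x ⬝ᵥ (M⁻¹).mulVec x < 0) ∧
    (∀ w v : V2, w ≠ v → M⁻¹ w v = ((A w.1 v.1 : ℤ) : ℚ)) ∧
    (∀ v : V2, v.1 ∉ Bdry G V2 → M⁻¹ v v = ((A v.1 v.1 : ℤ) : ℚ)) := by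
  have hpos : (-Aq A).PosDef := neg_posDef_iff.2 ⟨hAsymm.map _, hAneg⟩
  have hMpos : (-M).PosDef := by
    have h := hpos.inv.submatrix (e := ((↑) : V2 → V)) Subtype.val_injective
    rw [Matrix.inv_neg] at h
    rw [hM]
    exact h
  have hschur : M⁻¹ = schurComplement (Aq A) V2 := by
    rw [hM]
    refine inv_submatrix_inv_eq_schurComplement V2 ?_ ?_
    · exact (isUnit_iff_isUnit_det _).1 ((IsUnit.neg_iff _).1 hpos.isUnit)
    · exact (isUnit_iff_isUnit_det _).1
        ((IsUnit.neg_iff _).1 (hpos.submatrix Subtype.val_injective).isUnit)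
  have hsupp : ∀ a b, a ≠ b → ¬ G.Adj a b → Aq A a b = 0 := fun a b hab hadj => by
    simp [Aq, hAadj a b hab, hadj]
  obtain ⟨hsymm, hneg⟩ := neg_posDef_iff.1 (Matrix.inv_neg M ▸ hMpos.inv)
  refine ⟨(IsUnit.neg_iff M).1 hMpos.isUnit, hsymm, hneg, fun w v hwv => ?_, fun v hv => ?_⟩
  · rw [hschur, schurComplement_apply_of_ne hG.isAcyclic hsupp hV2conn.preconnected hwv]
    rfl
  · rw [hschur, schurComplement_apply_self hsupp fun a ha hva => hv ⟨v.2, a, ha, hva⟩]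
    rfl
end
end

section
/- Let v,w be adjacent vertices of T. Let T̄ be the tree on V̄ = V ∪ {e} (e a new vertex) obtained from T by replacing the edge vw by the two edges ve and ew, and let Ā be the symmetric V̄×V̄ matrix with Ā_{ee} = −1, Ā_{vv} = A_{vv} − 1, Ā_{ww} = A_{ww} − 1, Ā_{uu} = A_{uu} for all other u ∈ V, and off-diagonal entries given by adjacency in T̄. Then: Ā is negative definite; the Q-linear map ρ* : L'(T) → Q^{V̄} determined by ρ*(E*_u(T)) = E*_u(T̄) for all u ∈ V maps L'(T) into L'(T̄); and (i) z^T(l') = z^{T̄}(ρ*(l')) for all l' ∈ L'(T), (ii) q^T_{[l'_0],J}(l'_0) = q^{T̄}_{[ρ*(l'_0)],J}(ρ*(l'_0)) for every nonempty J ⊂ V and every l'_0 ∈ L'(T). -/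
open Matrix

open scoped Classical

noncomputable section

open Plumbing

namespace Plumbing

variable {V : Type*} [Fintype V] [DecidableEq V]

/-- The relation generating the blown-up graph: the edge `vw` is replaced by the two
edges through the new vertex `none`. -/
def blowupRel (G : SimpleGraph V) (v w : V) : Option V → Option V → Prop
  | some a, some b => G.Adj a b ∧ ¬(a = v ∧ b = w) ∧ ¬(a = w ∧ b = v)
  | none, some a => a = v ∨ a = w
  | _, _ => False

/-- The graph `T̄` obtained by blowing up the edge `vw` of `T`. -/
def blowupGraph (G : SimpleGraph V) (v w : V) : SimpleGraph (Option V) :=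
  SimpleGraph.fromRel (blowupRel G v w)

/-- The intersection matrix `Ā` of the blown-up graph: `Ā_{ee} = −1`,
`Ā_{vv} = A_{vv} − 1`, `Ā_{ww} = A_{ww} − 1`, all other diagonal entries unchanged,
and off-diagonal entries given by adjacency in `T̄`. -/
def blowupMat (G : SimpleGraph V) (A : Matrix V V ℤ) (v w : V) :
    Matrix (Option V) (Option V) ℤ :=
  Matrix.of fun x y =>
    if x = y then
      (match x with
        | none => -1
        | some u => if u = v ∨ u = w then A u u - 1 else A u u)
    else if (blowupGraph G v w).Adj x y then 1 else 0

/-- The `ℚ`-linear map `ρ* : L'(T) → ℚ^{V̄}` determined by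
`ρ*(E*_u(T)) = E*_u(T̄)`: it sends `l' = Σ_u a_u E*_u(T)` to `Σ_u a_u E*_u(T̄)`,
where `a = −A·l'` is the coordinate vector of `l'` in the dual base. -/
def rhostar (G : SimpleGraph V) (A : Matrix V V ℤ) (v w : V) (l' : V → ℚ) :
    Option V → ℚ :=
  fun x => ∑ u : V, (-(Aq A).mulVec l' u) * Estar (blowupMat G A v w) (some u) x

end Plumbing


namespace Plumbing

variable {V : Type} [Fintype V] [DecidableEq V]

lemma blowup_adj_some_some (G : SimpleGraph V) (v w a b : V) :
    (blowupGraph G v w).Adj (some a) (some b) ↔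
      G.Adj a b ∧ ¬(a = v ∧ b = w) ∧ ¬(a = w ∧ b = v) := by
  constructor
  · rintro ⟨hne, h | h⟩
    · exact h
    · exact ⟨h.1.symm, fun hx => h.2.2 ⟨hx.2, hx.1⟩, fun hx => h.2.1 ⟨hx.2, hx.1⟩⟩
  · intro h
    exact ⟨by simpa using G.ne_of_adj h.1, Or.inl h⟩

lemma blowup_adj_none_some (G : SimpleGraph V) (v w a : V) :
    (blowupGraph G v w).Adj none (some a) ↔ a = v ∨ a = w := by
  constructor
  · rintro ⟨hne, h | h⟩
    · exact h
    · exact h.elim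
  · intro h
    exact ⟨by simp, Or.inl h⟩

lemma blowup_adj_some_none (G : SimpleGraph V) (v w a : V) :
    (blowupGraph G v w).Adj (some a) none ↔ a = v ∨ a = w := by
  rw [SimpleGraph.adj_comm]; exact blowup_adj_none_some G v w a

/-- the correction vector -/
def uvec (v w : V) : Option V → ℚ := fun i =>
  (if i = some v then 1 else 0) + (if i = some w then 1 else 0) - (if i = none then 1 else 0)

/-- extension of the rational matrix by zeroes -/
def extM (A : Matrix V V ℤ) : Matrix (Option V) (Option V) ℚ :=
  Matrix.of fun i j => i.elim 0 (fun a => j.elim 0 (fun b => (A a b : ℚ)))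

lemma blowup_entry (G : SimpleGraph V) (A : Matrix V V ℤ)
    (hAadj : ∀ v w : V, v ≠ w → A v w = if G.Adj v w then 1 else 0)
    {v w : V} (hvw : G.Adj v w) :
    Aq (blowupMat G A v w) = extM A - Matrix.vecMulVec (uvec v w) (uvec v w) := by
  have hne : v ≠ w := G.ne_of_adj hvw
  ext i j
  rcases i with _ | a <;> rcases j with _ | b
  · simp [Aq, blowupMat, extM, uvec, Matrix.vecMulVec_apply]
  · by_cases hb : b = v
    · subst hb
      simp [Aq, blowupMat, extM, uvec, Matrix.vecMulVec_apply, blowup_adj_none_some, hne]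
    · by_cases hb2 : b = w
      · subst hb2
        simp [Aq, blowupMat, extM, uvec, Matrix.vecMulVec_apply, blowup_adj_none_some, hne,
          Ne.symm hne]
      · simp [Aq, blowupMat, extM, uvec, Matrix.vecMulVec_apply, blowup_adj_none_some, hb, hb2]
  · by_cases ha : a = v
    · subst ha
      simp [Aq, blowupMat, extM, uvec, Matrix.vecMulVec_apply, blowup_adj_some_none, hne]
    · by_cases ha2 : a = w
      · subst ha2
        simp [Aq, blowupMat, extM, uvec, Matrix.vecMulVec_apply, blowup_adj_some_none, hne,
          Ne.symm hne]
      · simp [Aq, blowupMat, extM, uvec, Matrix.vecMulVec_apply, blowup_adj_some_none, ha, ha2]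
  · by_cases hab : a = b
    · subst hab
      by_cases ha : a = v
      · subst ha
        simp [Aq, blowupMat, extM, uvec, Matrix.vecMulVec_apply, hne]
      · by_cases ha2 : a = w
        · subst ha2
          simp [Aq, blowupMat, extM, uvec, Matrix.vecMulVec_apply, hne, Ne.symm hne]
        · simp [Aq, blowupMat, extM, uvec, Matrix.vecMulVec_apply, ha, ha2]
    · have hAab : A a b = if G.Adj a b then 1 else 0 := hAadj a b hab
      simp only [Aq, blowupMat, extM, uvec, Matrix.vecMulVec_apply, Matrix.map_apply,
        Matrix.of_apply, Option.elim, Matrix.sub_apply]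
      rw [if_neg (by simpa using hab), blowup_adj_some_some]
      by_cases h1 : a = v <;> by_cases h2 : a = w <;> by_cases h3 : b = v <;> by_cases h4 : b = w <;>
        simp_all <;> norm_num <;> simp_all [hvw.symm]

end Plumbing

namespace Plumbing
set_option linter.unusedSectionVars false

variable {V : Type} [Fintype V] [DecidableEq V]

lemma uvec_dot (v w : V) (hne : v ≠ w) (x : Option V → ℚ) :
    uvec v w ⬝ᵥ x = x (some v) + x (some w) - x none := by
  simp only [dotProduct, uvec, Fintype.sum_option]
  simp [add_mul, sub_mul, Finset.sum_add_distrib, Finset.sum_ite_eq, hne]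
  ring

lemma extM_quad (A : Matrix V V ℤ) (x : Option V → ℚ) :
    x ⬝ᵥ (extM A).mulVec x = (x ∘ some) ⬝ᵥ (Aq A).mulVec (x ∘ some) := by
  simp only [dotProduct, Matrix.mulVec, Fintype.sum_option, extM, Aq, Matrix.of_apply,
    Matrix.map_apply, Option.elim, Function.comp]
  simp [dotProduct]

lemma quadform_blowup (G : SimpleGraph V) (A : Matrix V V ℤ)
    (hAadj : ∀ v w : V, v ≠ w → A v w = if G.Adj v w then 1 else 0)
    {v w : V} (hvw : G.Adj v w) (x : Option V → ℚ) :
    x ⬝ᵥ (Aq (blowupMat G A v w)).mulVec x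
      = (x ∘ some) ⬝ᵥ (Aq A).mulVec (x ∘ some)
        - (x (some v) + x (some w) - x none) ^ 2 := by
  have hne : v ≠ w := G.ne_of_adj hvw
  rw [blowup_entry G A hAadj hvw, Matrix.sub_mulVec, dotProduct_sub, extM_quad]
  congr 1
  have : (Matrix.vecMulVec (uvec v w) (uvec v w)).mulVec x
      = fun i => uvec v w i * (uvec v w ⬝ᵥ x) := by
    funext i
    simp only [Matrix.mulVec, Matrix.vecMulVec_apply, dotProduct]
    rw [Finset.mul_sum]
    exact Finset.sum_congr rfl fun j _ => by ring
  rw [this]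
  have : x ⬝ᵥ (fun i => uvec v w i * (uvec v w ⬝ᵥ x)) = (uvec v w ⬝ᵥ x) * (uvec v w ⬝ᵥ x) := by
    simp only [dotProduct, Finset.sum_mul]
    exact Finset.sum_congr rfl fun i _ => by ring
  rw [this, uvec_dot v w hne]
  ring

lemma negdef_blowup (G : SimpleGraph V) (A : Matrix V V ℤ)
    (hAadj : ∀ v w : V, v ≠ w → A v w = if G.Adj v w then 1 else 0)
    (hAneg : NegDef A) {v w : V} (hvw : G.Adj v w) :
    NegDef (blowupMat G A v w) := by
  intro x hx
  rw [quadform_blowup G A hAadj hvw x]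
  by_cases hy : (x ∘ some) = 0
  · have hxv : x (some v) = 0 := congrFun hy v
    have hxw : x (some w) = 0 := congrFun hy w
    have hxn : x none ≠ 0 := by
      intro h0
      apply hx
      funext i
      rcases i with _ | a
      · exact h0
      · exact congrFun hy a
    have h1 : (x ∘ some) ⬝ᵥ (Aq A).mulVec (x ∘ some) = 0 := by
      rw [hy]; simp
    have h2 : (0:ℚ) < (x (some v) + x (some w) - x none) ^ 2 := by
      rw [hxv, hxw]
      have : (0:ℚ) + 0 - x none ≠ 0 := by simpa using hxn
      positivity
    linarith
  · have := hAneg (x ∘ some) hy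
    have h2 : (0:ℚ) ≤ (x (some v) + x (some w) - x none) ^ 2 := sq_nonneg _
    linarith

lemma negdef_isUnit_det {W : Type} [Fintype W] [DecidableEq W] (B : Matrix W W ℤ)
    (hB : NegDef B) : IsUnit (Aq B).det := by
  rw [isUnit_iff_ne_zero]
  intro hdet
  obtain ⟨y, hy0, hy⟩ := Matrix.exists_mulVec_eq_zero_iff.2 hdet
  have := hB y hy0
  rw [hy] at this
  simp at this

lemma negdef_mulVec_injective {W : Type} [Fintype W] [DecidableEq W] (B : Matrix W W ℤ)
    (hB : NegDef B) : Function.Injective (Aq B).mulVec :=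
  Matrix.mulVec_injective_iff_isUnit.2 ((Matrix.isUnit_iff_isUnit_det _).2 (negdef_isUnit_det B hB))

lemma mulVec_Estar {W : Type} [Fintype W] [DecidableEq W] (B : Matrix W W ℤ)
    (hB : IsUnit (Aq B).det) (x0 : W) :
    (Aq B).mulVec (Estar B x0) = fun i => if i = x0 then (-1 : ℚ) else 0 := by
  funext i
  have h := Matrix.mul_nonsing_inv (Aq B) hB
  have h2 : ((Aq B) * (Aq B)⁻¹) i x0 = (1 : Matrix W W ℚ) i x0 := by rw [h]
  rw [Matrix.mul_apply] at h2
  simp only [Matrix.mulVec, dotProduct, Estar, Matrix.neg_apply]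
  calc ∑ j, Aq B i j * -(Aq B)⁻¹ j x0 = -∑ j, Aq B i j * (Aq B)⁻¹ j x0 := by
        rw [← Finset.sum_neg_distrib]; exact Finset.sum_congr rfl fun j _ => by ring
    _ = -(1 : Matrix W W ℚ) i x0 := by rw [h2]
    _ = if i = x0 then (-1:ℚ) else 0 := by
        simp only [Matrix.one_apply]
        split_ifs <;> norm_num

end Plumbing

namespace Plumbing
set_option linter.unusedSectionVars false

variable {V : Type} [Fintype V] [DecidableEq V]

/-- The extension of a vector to the blown-up vertex set. -/
def extv (v w : V) (y : V → ℚ) : Option V → ℚ := fun i => i.elim (y v + y w) y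

lemma extv_injective (v w : V) : Function.Injective (extv v w) := by
  intro y y' h
  funext a
  exact congrFun h (some a)

lemma mulVec_sum_smul {W n : Type} [Fintype W] [Fintype n] (B : Matrix W W ℚ)
    (c : n → ℚ) (f : n → W → ℚ) :
    B.mulVec (∑ u, c u • f u) = ∑ u, c u • B.mulVec (f u) := by
  rw [← Matrix.mulVecLin_apply, map_sum]
  exact Finset.sum_congr rfl fun u _ => by rw [_root_.map_smul, Matrix.mulVecLin_apply]

lemma mulVec_extv (G : SimpleGraph V) (A : Matrix V V ℤ)
    (hAadj : ∀ v w : V, v ≠ w → A v w = if G.Adj v w then 1 else 0)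
    {v w : V} (hvw : G.Adj v w) (y : V → ℚ) :
    (Aq (blowupMat G A v w)).mulVec (extv v w y) = fun i => i.elim 0 ((Aq A).mulVec y) := by
  have hne : v ≠ w := G.ne_of_adj hvw
  rw [blowup_entry G A hAadj hvw, Matrix.sub_mulVec]
  have hvmv : (Matrix.vecMulVec (uvec v w) (uvec v w)).mulVec (extv v w y)
      = fun i => uvec v w i * (uvec v w ⬝ᵥ extv v w y) := by
    funext i
    simp only [Matrix.mulVec, Matrix.vecMulVec_apply, dotProduct]
    rw [Finset.mul_sum]
    exact Finset.sum_congr rfl fun j _ => by ring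
  have hdot : uvec v w ⬝ᵥ extv v w y = 0 := by
    rw [uvec_dot v w hne]
    simp [extv]
  rw [hvmv, hdot]
  funext i
  rcases i with _ | a
  · simp [extM, Aq, Matrix.mulVec, dotProduct]
  · simp only [extM, Aq, Matrix.mulVec, dotProduct, Fintype.sum_option, Matrix.of_apply,
      Option.elim, Matrix.map_apply, Pi.sub_apply, mul_zero, sub_zero, zero_mul]
    simp [extv]

lemma Estar_blowup (G : SimpleGraph V) (A : Matrix V V ℤ)
    (hAadj : ∀ v w : V, v ≠ w → A v w = if G.Adj v w then 1 else 0)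
    (hAneg : NegDef A) {v w : V} (hvw : G.Adj v w) (u : V) :
    Estar (blowupMat G A v w) (some u) = extv v w (Estar A u) := by
  have hBneg := negdef_blowup G A hAadj hAneg hvw
  apply negdef_mulVec_injective _ hBneg
  rw [mulVec_Estar _ (negdef_isUnit_det _ hBneg), mulVec_extv G A hAadj hvw,
    mulVec_Estar A (negdef_isUnit_det A hAneg)]
  funext i
  rcases i with _ | a <;> simp

lemma rhostar_eq (G : SimpleGraph V) (A : Matrix V V ℤ)
    (hAadj : ∀ v w : V, v ≠ w → A v w = if G.Adj v w then 1 else 0)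
    (hAneg : NegDef A) {v w : V} (hvw : G.Adj v w) (l' : V → ℚ) :
    rhostar G A v w l' = extv v w l' := by
  have hBneg := negdef_blowup G A hAadj hAneg hvw
  apply negdef_mulVec_injective _ hBneg
  have hr : rhostar G A v w l'
      = ∑ u, (-(Aq A).mulVec l' u) • Estar (blowupMat G A v w) (some u) := by
    funext x
    rw [Finset.sum_apply]
    simp [rhostar]
  rw [hr, mulVec_sum_smul, mulVec_extv G A hAadj hvw]
  funext i
  rw [Finset.sum_apply]
  simp only [Pi.smul_apply, mulVec_Estar _ (negdef_isUnit_det _ hBneg), smul_eq_mul,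
    mul_ite, mul_neg, mul_one, mul_zero]
  rcases i with _ | a
  · simp
  · simp [Finset.sum_ite_eq]

lemma memLp_extv_iff (G : SimpleGraph V) (A : Matrix V V ℤ)
    (hAadj : ∀ v w : V, v ≠ w → A v w = if G.Adj v w then 1 else 0)
    {v w : V} (hvw : G.Adj v w) (y : V → ℚ) :
    memLp (blowupMat G A v w) (extv v w y) ↔ memLp A y := by
  unfold memLp
  rw [mulVec_extv G A hAadj hvw]
  constructor
  · intro h a
    exact h (some a)
  · intro h i
    rcases i with _ | a
    · exact ⟨0, by simp⟩
    · exact h a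

lemma sameClass_extv_iff (v w : V) (y x : V → ℚ) :
    sameClass (extv v w y) (extv v w x) ↔ sameClass y x := by
  constructor
  · intro h a
    exact h (some a)
  · intro h i
    rcases i with _ | a
    · obtain ⟨n1, h1⟩ := h v
      obtain ⟨n2, h2⟩ := h w
      refine ⟨n1 + n2, ?_⟩
      simp only [extv, Option.elim]
      push_cast
      linarith
    · exact h a

lemma deg_blowup_none (G : SimpleGraph V) {v w : V} (hvw : G.Adj v w) :
    deg (blowupGraph G v w) none = 2 := by
  have hset : (blowupGraph G v w).neighborSet none = {some v, some w} := by
    ext i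
    rcases i with _ | a
    · simp [SimpleGraph.neighborSet]
    · simp [SimpleGraph.neighborSet, blowup_adj_none_some]
  rw [deg, hset, Set.ncard_pair (by simpa using G.ne_of_adj hvw)]

lemma deg_blowup_some (G : SimpleGraph V) {v w : V} (hvw : G.Adj v w) (u : V) :
    deg (blowupGraph G v w) (some u) = deg G u := by
  have hne : v ≠ w := G.ne_of_adj hvw
  by_cases hu : u = v
  · subst hu
    set f : V → Option V := fun b => if b = w then none else some b with hf
    have hinj : Function.Injective f := by
      intro b b' h
      by_cases hb : b = w <;> by_cases hb' : b' = w <;>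
        simp [hf, hb, hb'] at h <;> simp [hb, hb', h]
    have hset : (blowupGraph G u w).neighborSet (some u) = f '' (G.neighborSet u) := by
      ext i
      rcases i with _ | a
      · constructor
        · intro _
          exact ⟨w, hvw, by simp [hf]⟩
        · intro _
          exact (blowup_adj_some_none G u w u).2 (Or.inl rfl)
      · constructor
        · intro h
          obtain ⟨hadj, h1, _⟩ := (blowup_adj_some_some G u w u a).1 h
          have haw : a ≠ w := fun hh => h1 ⟨rfl, hh⟩
          exact ⟨a, hadj, by simp [hf, haw]⟩
        · rintro ⟨b, hb, hfb⟩
          by_cases hbw : b = w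
          · rw [hf] at hfb; simp [hbw] at hfb
          · rw [hf] at hfb
            simp only [if_neg hbw, Option.some_inj] at hfb
            subst hfb
            exact (blowup_adj_some_some G u w u b).2
              ⟨hb, fun h => hbw h.2, fun h => hne h.1⟩
    rw [deg, hset, Set.ncard_image_of_injective _ hinj, deg]
  · by_cases hu' : u = w
    · subst hu'
      set f : V → Option V := fun b => if b = v then none else some b with hf
      have hinj : Function.Injective f := by
        intro b b' h
        by_cases hb : b = v <;> by_cases hb' : b' = v <;>
          simp [hf, hb, hb'] at h <;> simp [hb, hb', h]
      have hset : (blowupGraph G v u).neighborSet (some u) = f '' (G.neighborSet u) := by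
        ext i
        rcases i with _ | a
        · constructor
          · intro _
            exact ⟨v, hvw.symm, by simp [hf]⟩
          · intro _
            exact (blowup_adj_some_none G v u u).2 (Or.inr rfl)
        · constructor
          · intro h
            obtain ⟨hadj, _, h2⟩ := (blowup_adj_some_some G v u u a).1 h
            have hav : a ≠ v := fun hh => h2 ⟨rfl, hh⟩
            exact ⟨a, hadj, by simp [hf, hav]⟩
          · rintro ⟨b, hb, hfb⟩
            by_cases hbv : b = v
            · rw [hf] at hfb; simp [hbv] at hfb
            · rw [hf] at hfb
              simp only [if_neg hbv, Option.some_inj] at hfb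
              subst hfb
              exact (blowup_adj_some_some G v u u b).2
                ⟨hb, fun h => hne h.1.symm, fun h => hbv h.2⟩
      rw [deg, hset, Set.ncard_image_of_injective _ hinj, deg]
    · have hset : (blowupGraph G v w).neighborSet (some u) = some '' (G.neighborSet u) := by
        ext i
        rcases i with _ | a
        · constructor
          · intro h
            rcases (blowup_adj_some_none G v w u).1 h with h' | h'
            · exact absurd h' hu
            · exact absurd h' hu'
          · rintro ⟨b, _, hb⟩
            simp at hb
        · constructor
          · intro h
            exact ⟨a, ((blowup_adj_some_some G v w u a).1 h).1, rfl⟩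
          · rintro ⟨b, hb, hfb⟩
            rw [Option.some_inj] at hfb
            subst hfb
            exact (blowup_adj_some_some G v w u b).2
              ⟨hb, fun h => hu h.1, fun h => hu' h.1⟩
      rw [deg, hset, Set.ncard_image_of_injective _ (Option.some_injective V), deg]

end Plumbing

namespace Plumbing
set_option linter.unusedSectionVars false

variable {V : Type} [Fintype V] [DecidableEq V]

lemma ccoef_two_zero : ccoef 2 0 = 1 := by simp [ccoef]

lemma ccoef_two_ne_zero {k : ℕ} (hk : k ≠ 0) : ccoef 2 k = 0 := by
  simp [ccoef, Nat.choose_eq_zero_of_lt (Nat.pos_of_ne_zero hk)]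

lemma finsum_comp_inj {A B M : Type*} [AddCommMonoid M] {f : A → M} {g : B → A}
    (hg : Function.Injective g) (h : Function.support f ⊆ Set.range g) :
    ∑ᶠ a, f a = ∑ᶠ b, f (g b) := by
  rw [← finsum_mem_univ f,
    finsum_mem_inter_support_eq f Set.univ (Set.range g)
      (by rw [Set.univ_inter, Set.inter_eq_right.2 h]),
    finsum_mem_range hg]

lemma sum_smul_Estar_mulVec {W : Type} [Fintype W] [DecidableEq W] (B : Matrix W W ℤ)
    (hB : IsUnit (Aq B).det) (c : W → ℚ) :
    (Aq B).mulVec (∑ x, c x • Estar B x) = -c := by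
  rw [mulVec_sum_smul]
  funext i
  rw [Finset.sum_apply]
  simp only [Pi.smul_apply, mulVec_Estar B hB, smul_eq_mul, mul_ite, mul_neg, mul_one, mul_zero]
  simp [Finset.sum_ite_eq]

lemma sum_smul_Estar_eq_iff {W : Type} [Fintype W] [DecidableEq W] (B : Matrix W W ℤ)
    (hB : NegDef B) (c l' : W → ℚ) :
    (∑ x, c x • Estar B x) = l' ↔ c = -(Aq B).mulVec l' := by
  have hdet := negdef_isUnit_det B hB
  constructor
  · rintro rfl
    rw [sum_smul_Estar_mulVec B hdet, neg_neg]
  · rintro rfl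
    apply negdef_mulVec_injective B hB
    rw [sum_smul_Estar_mulVec B hdet, neg_neg]

lemma extv_sum_smul (v w : V) (a : V → ℚ) (f : V → V → ℚ) :
    extv v w (∑ u, a u • f u) = ∑ u, a u • extv v w (f u) := by
  funext i
  rw [Finset.sum_apply]
  rcases i with _ | b
  · show (∑ u, a u • f u) v + (∑ u, a u • f u) w = _
    simp only [Finset.sum_apply, Pi.smul_apply, smul_eq_mul]
    rw [← Finset.sum_add_distrib]
    refine Finset.sum_congr rfl fun u _ => ?_
    show a u * f u v + a u * f u w = a u • extv v w (f u) none
    show a u * f u v + a u * f u w = a u * (f u v + f u w)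
    ring
  · show (∑ u, a u • f u) b = _
    simp only [Finset.sum_apply, Pi.smul_apply, smul_eq_mul]
    exact Finset.sum_congr rfl fun u _ => rfl

lemma zcoef_cond_iff (G : SimpleGraph V) (A : Matrix V V ℤ)
    (hAadj : ∀ v w : V, v ≠ w → A v w = if G.Adj v w then 1 else 0)
    (hAneg : NegDef A) {v w : V} (hvw : G.Adj v w) (l' : V → ℚ) (kk : Option V → ℕ) :
    ((∑ x, (kk x : ℚ) • Estar (blowupMat G A v w) x) = extv v w l') ↔
      (((∑ u, (kk (some u) : ℚ) • Estar A u) = l') ∧ kk none = 0) := by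
  have hBneg := negdef_blowup G A hAadj hAneg hvw
  rw [sum_smul_Estar_eq_iff _ hBneg, sum_smul_Estar_eq_iff _ hAneg,
    mulVec_extv G A hAadj hvw]
  constructor
  · intro h
    constructor
    · funext a
      have := congrFun h (some a)
      simpa using this
    · have := congrFun h none
      simpa using this
  · rintro ⟨h1, h0⟩
    funext i
    rcases i with _ | a
    · simpa using h0
    · have := congrFun h1 a
      simpa using this

lemma zcoef_blowup (G : SimpleGraph V) (A : Matrix V V ℤ)
    (hAadj : ∀ v w : V, v ≠ w → A v w = if G.Adj v w then 1 else 0)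
    (hAneg : NegDef A) {v w : V} (hvw : G.Adj v w) (l' : V → ℚ) :
    zcoef A (deg G) l'
      = zcoef (blowupMat G A v w) (deg (blowupGraph G v w)) (extv v w l') := by
  unfold zcoef
  have hinj : Function.Injective (fun (k : V → ℕ) (i : Option V) => i.elim 0 k) := by
    intro k k' h
    funext a
    exact congrFun h (some a)
  have hsupp : Function.support (fun kk : Option V → ℕ =>
      if (∑ x, (kk x : ℚ) • Estar (blowupMat G A v w) x) = extv v w l' then
        ∏ x, ccoef (deg (blowupGraph G v w) x) (kk x) else 0)
      ⊆ Set.range (fun (k : V → ℕ) (i : Option V) => i.elim 0 k) := by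
    intro kk hkk
    have hcond : (∑ x, (kk x : ℚ) • Estar (blowupMat G A v w) x) = extv v w l' := by
      by_contra hc
      exact hkk (if_neg hc)
    obtain ⟨-, h0⟩ := (zcoef_cond_iff G A hAadj hAneg hvw l' kk).1 hcond
    refine ⟨fun u => kk (some u), ?_⟩
    funext i
    rcases i with _ | a
    · exact h0.symm
    · rfl
  calc (∑ᶠ k : V → ℕ, if (∑ u, (k u : ℚ) • Estar A u) = l' then
          ∏ u, ccoef (deg G u) (k u) else 0)
      = ∑ᶠ k : V → ℕ,
          (fun kk : Option V → ℕ =>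
            if (∑ x, (kk x : ℚ) • Estar (blowupMat G A v w) x) = extv v w l' then
              ∏ x, ccoef (deg (blowupGraph G v w) x) (kk x) else 0)
            ((fun (k : V → ℕ) (i : Option V) => i.elim 0 k) k) := by
        refine finsum_congr fun k => ?_
        have hcond : ((∑ x, (((fun (i : Option V) => i.elim 0 k) x : ℕ) : ℚ)
              • Estar (blowupMat G A v w) x) = extv v w l')
            ↔ ((∑ u, (k u : ℚ) • Estar A u) = l') := by
          rw [zcoef_cond_iff G A hAadj hAneg hvw l']
          simp
        have hprod : (∏ x, ccoef (deg (blowupGraph G v w) x)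
              ((fun (i : Option V) => i.elim 0 k) x))
            = ∏ u, ccoef (deg G u) (k u) := by
          rw [Fintype.prod_option]
          simp [deg_blowup_none G hvw, deg_blowup_some G hvw, ccoef_two_zero]
        exact (if_congr hcond hprod rfl).symm
    _ = _ := (finsum_comp_inj hinj hsupp).symm

lemma zcoef_blowup_support (G : SimpleGraph V) (A : Matrix V V ℤ)
    (hAadj : ∀ v w : V, v ≠ w → A v w = if G.Adj v w then 1 else 0)
    (hAneg : NegDef A) {v w : V} (hvw : G.Adj v w) (lb : Option V → ℚ)
    (h : zcoef (blowupMat G A v w) (deg (blowupGraph G v w)) lb ≠ 0) :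
    ∃ y : V → ℚ, lb = extv v w y := by
  have hBneg := negdef_blowup G A hAadj hAneg hvw
  unfold zcoef at h
  by_cases hex : ∃ kk : Option V → ℕ, (∑ x, (kk x : ℚ) • Estar (blowupMat G A v w) x) = lb
  · obtain ⟨kk, hkk⟩ := hex
    have hz : (∑ᶠ k' : Option V → ℕ,
        if (∑ x, (k' x : ℚ) • Estar (blowupMat G A v w) x) = lb then
          ∏ x, ccoef (deg (blowupGraph G v w) x) (k' x) else 0)
        = ∏ x, ccoef (deg (blowupGraph G v w) x) (kk x) := by
      rw [finsum_eq_single _ kk, if_pos hkk]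
      intro k' hk'
      rw [if_neg]
      intro hc
      apply hk'
      have h1 := (sum_smul_Estar_eq_iff _ hBneg _ _).1 hc
      have h2 := (sum_smul_Estar_eq_iff _ hBneg _ _).1 hkk
      funext i
      have : ((k' i : ℚ)) = (kk i : ℚ) := by rw [congrFun h1 i, congrFun h2 i]
      exact_mod_cast this
    rw [hz] at h
    by_cases h0 : kk none = 0
    · refine ⟨∑ u, (kk (some u) : ℚ) • Estar A u, ?_⟩
      rw [← hkk, Fintype.sum_option, h0, extv_sum_smul]
      simp only [Nat.cast_zero, zero_smul, zero_add]
      refine Finset.sum_congr rfl fun u _ => ?_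
      rw [Estar_blowup G A hAadj hAneg hvw]
    · exfalso
      apply h
      apply Finset.prod_eq_zero (Finset.mem_univ (none : Option V))
      rw [deg_blowup_none G hvw]
      exact ccoef_two_ne_zero h0
  · exact absurd ((finsum_congr fun k' =>
      if_neg fun hc => hex ⟨k', hc⟩).trans finsum_zero) h

lemma lt_extv_iff (v w : V) (J : Set V) (y x : V → ℚ) :
    (∀ i ∈ Option.some '' J, extv v w y i < extv v w x i) ↔ ∀ a ∈ J, y a < x a := by
  constructor
  · intro h a ha
    exact h (some a) ⟨a, ha, rfl⟩
  · rintro h i ⟨a, ha, rfl⟩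
    exact h a ha

lemma qmod_blowup (G : SimpleGraph V) (A : Matrix V V ℤ)
    (hAadj : ∀ v w : V, v ≠ w → A v w = if G.Adj v w then 1 else 0)
    (hAneg : NegDef A) {v w : V} (hvw : G.Adj v w) (J : Set V) (x : V → ℚ) :
    qmod A (deg G) J x
      = qmod (blowupMat G A v w) (deg (blowupGraph G v w)) (Option.some '' J)
          (extv v w x) := by
  unfold qmod
  have hsupp : Function.support (fun lb : Option V → ℚ =>
      if memLp (blowupMat G A v w) lb ∧ sameClass lb (extv v w x) ∧
          (∀ i ∈ Option.some '' J, lb i < extv v w x i) then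
        zcoef (blowupMat G A v w) (deg (blowupGraph G v w)) lb else 0)
      ⊆ Set.range (extv v w) := by
    intro lb hl
    have hz : zcoef (blowupMat G A v w) (deg (blowupGraph G v w)) lb ≠ 0 := by
      intro h0
      apply hl
      dsimp only
      split_ifs with hc
      exacts [h0, rfl]
    obtain ⟨y, hy⟩ := zcoef_blowup_support G A hAadj hAneg hvw lb hz
    exact ⟨y, hy.symm⟩
  calc (∑ᶠ l' : V → ℚ, if memLp A l' ∧ sameClass l' x ∧ (∀ a ∈ J, l' a < x a) then
          zcoef A (deg G) l' else 0)
      = ∑ᶠ y : V → ℚ,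
          (fun lb : Option V → ℚ =>
            if memLp (blowupMat G A v w) lb ∧ sameClass lb (extv v w x) ∧
                (∀ i ∈ Option.some '' J, lb i < extv v w x i) then
              zcoef (blowupMat G A v w) (deg (blowupGraph G v w)) lb else 0)
            (extv v w y) := by
        refine finsum_congr fun y => ?_
        refine (if_congr ?_ ?_ rfl).symm
        · rw [memLp_extv_iff G A hAadj hvw, sameClass_extv_iff, lt_extv_iff]
        · exact (zcoef_blowup G A hAadj hAneg hvw y).symm
    _ = _ := (finsum_comp_inj (extv_injective v w) hsupp).symm

end Plumbing


/-- invariance of the coefficients of the series and of the modified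
counting functions under blowing up an edge `vw` of the graph. -/
theorem statement12 (V : Type) [Fintype V] [DecidableEq V]
    (G : SimpleGraph V) (hG : G.IsTree)
    (A : Matrix V V ℤ) (hAsymm : A.IsSymm)
    (hAadj : ∀ v w : V, v ≠ w → A v w = if G.Adj v w then 1 else 0)
    (hAneg : NegDef A)
    (v w : V) (hvw : G.Adj v w) :
    NegDef (blowupMat G A v w) ∧
    (∀ u : V, rhostar G A v w (Estar A u) = Estar (blowupMat G A v w) (some u)) ∧
    (∀ l' : V → ℚ, memLp A l' → memLp (blowupMat G A v w) (rhostar G A v w l')) ∧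
    (∀ l' : V → ℚ, memLp A l' →
      zcoef A (deg G) l'
        = zcoef (blowupMat G A v w) (deg (blowupGraph G v w)) (rhostar G A v w l')) ∧
    (∀ (J : Set V), J.Nonempty → ∀ l'₀ : V → ℚ, memLp A l'₀ →
      qmod A (deg G) J l'₀
        = qmod (blowupMat G A v w) (deg (blowupGraph G v w)) (Option.some '' J)
            (rhostar G A v w l'₀)) := by
  refine ⟨negdef_blowup G A hAadj hAneg hvw, ?_, ?_, ?_, ?_⟩
  · intro u
    rw [rhostar_eq G A hAadj hAneg hvw, Estar_blowup G A hAadj hAneg hvw]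
  · intro l' hl'
    rw [rhostar_eq G A hAadj hAneg hvw]
    exact (memLp_extv_iff G A hAadj hvw l').2 hl'
  · intro l' _hl'
    rw [rhostar_eq G A hAadj hAneg hvw]
    exact zcoef_blowup G A hAadj hAneg hvw l'
  · intro J _hJ l'0 _hl'0
    rw [rhostar_eq G A hAadj hAneg hvw]
    exact qmod_blowup G A hAadj hAneg hvw J l'0
end
end

section
/- For every h ∈ H, the set {s ∈ S' : [s] = h} is nonempty and possesses a unique minimum s_h with respect to the coordinatewise partial order: s_h ∈ S', [s_h] = h, and s_h ≤ s for every s ∈ S' with [s] = h. -/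
open Matrix

open scoped Classical

noncomputable section

open Plumbing

section Aux13

variable {V : Type} [Fintype V] [DecidableEq V]

private lemma sum_smul_Estar (A : Matrix V V ℤ) (b : V → ℚ) :
    (∑ v, b v • Estar A v) = (-(Aq A)⁻¹).mulVec b := by
  funext w
  simp only [Finset.sum_apply, Pi.smul_apply, Estar, smul_eq_mul, Matrix.mulVec,
    dotProduct, Matrix.neg_apply]
  exact Finset.sum_congr rfl fun v _ => by ring

private lemma nonneg_of_mulVec_nonpos (B : Matrix V V ℚ)
    (hoff : ∀ v w, v ≠ w → 0 ≤ B v w)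
    (hneg : ∀ y : V → ℚ, y ≠ 0 → y ⬝ᵥ B.mulVec y < 0)
    (u : V → ℚ) (hu : ∀ v, B.mulVec u v ≤ 0) (v : V) : 0 ≤ u v := by
  by_contra hv
  push_neg at hv
  set m : V → ℚ := fun w => min (u w) 0 with hm
  set p : V → ℚ := fun w => max (u w) 0 with hp
  have hm0 : m ≠ 0 := by
    intro h
    have h1 : m v = 0 := congrFun h v
    have h2 : m v = u v := min_eq_left hv.le
    linarith
  have h1 : 0 ≤ m ⬝ᵥ B.mulVec u := by
    rw [dotProduct]
    refine Finset.sum_nonneg fun w _ => ?_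
    have h1 : m w ≤ 0 := min_le_right _ _
    have h2 := hu w
    nlinarith
  have h2 : m ⬝ᵥ B.mulVec p ≤ 0 := by
    rw [dotProduct]
    refine Finset.sum_nonpos fun w _ => ?_
    rcases le_or_gt 0 (u w) with h | h
    · have : m w = 0 := min_eq_right h
      rw [this, zero_mul]
    · have hmw : m w ≤ 0 := min_le_right _ _
      have hBp : 0 ≤ B.mulVec p w := by
        rw [Matrix.mulVec, dotProduct]
        refine Finset.sum_nonneg fun z _ => ?_
        by_cases hz : z = w
        · subst hz
          have : p z = 0 := max_eq_right h.le
          rw [this, mul_zero]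
        · exact mul_nonneg (hoff w z fun hh => hz hh.symm) (le_max_right _ _)
      nlinarith
  have hump : m = u - p := by
    funext w
    have := min_add_max (u w) 0
    simp only [hm, hp, Pi.sub_apply]
    linarith
  have h4 : B.mulVec m = B.mulVec u - B.mulVec p := by
    rw [hump, Matrix.mulVec_sub]
  have h5 : m ⬝ᵥ B.mulVec m = m ⬝ᵥ B.mulVec u - m ⬝ᵥ B.mulVec p := by
    rw [h4, dotProduct_sub]
  have := hneg m hm0
  linarith

private lemma cone_iff (A : Matrix V V ℤ) (hdet : IsUnit (Aq A).det) (s : V → ℚ) :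
    (∃ a : V → ℕ, s = ∑ v, (a v : ℚ) • Estar A v) ↔
      ∀ v, ∃ n : ℕ, (Aq A).mulVec s v = -(n : ℚ) := by
  constructor
  · rintro ⟨a, rfl⟩ v
    refine ⟨a v, ?_⟩
    rw [sum_smul_Estar, Matrix.mulVec_mulVec, Matrix.mul_neg,
      Matrix.mul_nonsing_inv _ hdet, Matrix.neg_mulVec, Matrix.one_mulVec]
    simp
  · intro h
    choose n hn using h
    refine ⟨n, ?_⟩
    have hs : (Aq A).mulVec s = fun v => -(n v : ℚ) := funext hn
    have hcalc : s = (Aq A)⁻¹.mulVec ((Aq A).mulVec s) := by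
      rw [Matrix.mulVec_mulVec, Matrix.nonsing_inv_mul _ hdet, Matrix.one_mulVec]
    rw [sum_smul_Estar, hcalc, hs]
    have he : (fun v => -(n v : ℚ)) = -(fun v => (n v : ℚ)) := rfl
    rw [he, Matrix.mulVec_neg, Matrix.neg_mulVec]

private lemma mulVec_int (A : Matrix V V ℤ) (x s : V → ℚ) (hx : memLp A x)
    (hcl : sameClass s x) (v : V) : ∃ z : ℤ, (Aq A).mulVec s v = (z : ℚ) := by
  choose k hk using hcl
  have hs : s = fun w => x w + (k w : ℚ) := funext fun w => by linarith [hk w]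
  obtain ⟨n, hn⟩ := hx v
  refine ⟨n + ∑ w, A v w * k w, ?_⟩
  have h1 : (Aq A).mulVec s v = (Aq A).mulVec x v + ∑ w, (A v w : ℚ) * (k w : ℚ) := by
    rw [hs]
    simp only [Matrix.mulVec, dotProduct, Aq, Matrix.map_apply]
    rw [← Finset.sum_add_distrib]
    exact Finset.sum_congr rfl fun w _ => by ring
  rw [h1, hn]
  push_cast
  ring

private lemma exists_nat_neg_of {q : ℚ} (h0 : q ≤ 0) (z : ℤ) (hz : q = (z : ℚ)) :
    ∃ n : ℕ, q = -(n : ℚ) := by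
  have hz0 : z ≤ 0 := by
    have : (z : ℚ) ≤ 0 := hz ▸ h0
    exact_mod_cast this
  refine ⟨(-z).toNat, ?_⟩
  have h1 : z = -(((-z).toNat : ℤ)) := by omega
  rw [hz]
  exact_mod_cast h1

private lemma mulVec_min_le_of (B : Matrix V V ℚ) (hoff : ∀ v w, v ≠ w → 0 ≤ B v w)
    (s1 s2 : V → ℚ) (v : V) (h : s1 v ≤ s2 v) :
    B.mulVec (fun w => min (s1 w) (s2 w)) v ≤ B.mulVec s1 v := by
  simp only [Matrix.mulVec, dotProduct]
  refine Finset.sum_le_sum fun w _ => ?_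
  by_cases hw : w = v
  · subst hw; rw [min_eq_left h]
  · exact mul_le_mul_of_nonneg_left (min_le_left _ _) (hoff v w fun hh => hw hh.symm)

private lemma mulVec_min_nonpos (B : Matrix V V ℚ) (hoff : ∀ v w, v ≠ w → 0 ≤ B v w)
    (s1 s2 : V → ℚ) (h1 : ∀ v, B.mulVec s1 v ≤ 0) (h2 : ∀ v, B.mulVec s2 v ≤ 0) (v : V) :
    B.mulVec (fun w => min (s1 w) (s2 w)) v ≤ 0 := by
  rcases le_total (s1 v) (s2 v) with h | h
  · exact le_trans (mulVec_min_le_of B hoff s1 s2 v h) (h1 v)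
  · have e : (fun w => min (s1 w) (s2 w)) = fun w => min (s2 w) (s1 w) :=
      funext fun w => min_comm _ _
    rw [e]
    exact le_trans (mulVec_min_le_of B hoff s2 s1 v h) (h2 v)

end Aux13

/-- every class `h ∈ H` has a unique minimal representative `s_h` in the
Lipman cone `S'`. -/
theorem statement13 (V : Type) [Fintype V] [DecidableEq V]
    (G : SimpleGraph V) (hG : G.IsTree)
    (A : Matrix V V ℤ) (hAsymm : A.IsSymm)
    (hAadj : ∀ v w : V, v ≠ w → A v w = if G.Adj v w then 1 else 0)
    (hAneg : NegDef A)
    (x : V → ℚ) (hx : memLp A x) :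
    ∃! s : V → ℚ, (∃ a : V → ℕ, s = ∑ v, (a v : ℚ) • Estar A v) ∧ sameClass s x ∧
      ∀ s' : V → ℚ, (∃ a : V → ℕ, s' = ∑ v, (a v : ℚ) • Estar A v) →
        sameClass s' x → s ≤ s' := by
  classical
  -- Basic properties of B = Aq A
  have hoff : ∀ v w, v ≠ w → 0 ≤ Aq A v w := by
    intro v w hvw
    simp only [Aq, Matrix.map_apply]
    rw [hAadj v w hvw]
    split_ifs <;> norm_num
  have hdet : IsUnit (Aq A).det := by
    rcases eq_or_ne (Aq A).det 0 with h | h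
    · obtain ⟨y, hy0, hy⟩ := (Matrix.exists_mulVec_eq_zero_iff).mpr h
      have hlt := hAneg y hy0
      rw [hy] at hlt
      simp at hlt
    · exact isUnit_iff_ne_zero.mpr h
  -- The set of candidates
  set S : (V → ℚ) → Prop :=
    fun s => (∀ v, ∃ n : ℕ, (Aq A).mulVec s v = -(n : ℚ)) ∧ sameClass s x with hSdef
  have hSnonpos : ∀ s, S s → ∀ v, (Aq A).mulVec s v ≤ 0 := by
    intro s hs v
    obtain ⟨n, hn⟩ := hs.1 v
    rw [hn]
    simp
  have hSnn : ∀ s, S s → ∀ v, 0 ≤ s v := fun s hs =>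
    nonneg_of_mulVec_nonpos (Aq A) hoff hAneg s (hSnonpos s hs)
  -- Closure under coordinatewise min
  have hminS : ∀ s1 s2, S s1 → S s2 → S (fun w => min (s1 w) (s2 w)) := by
    intro s1 s2 hs1 hs2
    have hcl : sameClass (fun w => min (s1 w) (s2 w)) x := by
      intro w
      rcases min_cases (s1 w) (s2 w) with ⟨h, _⟩ | ⟨h, _⟩
      · simpa [h] using hs1.2 w
      · simpa [h] using hs2.2 w
    refine ⟨fun v => ?_, hcl⟩
    obtain ⟨z, hz⟩ := mulVec_int A x (fun w => min (s1 w) (s2 w)) hx hcl v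
    exact exists_nat_neg_of
      (mulVec_min_nonpos (Aq A) hoff s1 s2 (hSnonpos s1 hs1) (hSnonpos s2 hs2) v) z hz
  -- Nonemptiness of S
  have hu0 : ∃ u0 : V → ℚ, (∀ v, 0 ≤ u0 v) ∧ (Aq A).mulVec u0 = -1 := by
    refine ⟨-((Aq A)⁻¹.mulVec 1), ?_, ?_⟩
    · refine nonneg_of_mulVec_nonpos (Aq A) hoff hAneg _ fun v => ?_
      rw [Matrix.mulVec_neg, Matrix.mulVec_mulVec, Matrix.mul_nonsing_inv _ hdet,
        Matrix.one_mulVec]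
      simp
    · rw [Matrix.mulVec_neg, Matrix.mulVec_mulVec, Matrix.mul_nonsing_inv _ hdet,
        Matrix.one_mulVec]
  obtain ⟨u0, hu0nn, hBu0⟩ := hu0
  obtain ⟨Nq, hNq⟩ := Finite.exists_le fun v => (Aq A).mulVec x v + ∑ w, |Aq A v w|
  obtain ⟨N, hN⟩ := exists_nat_ge Nq
  set y : V → ℤ := fun w => ⌈(N : ℚ) * u0 w⌉ with hy
  set s0 : V → ℚ := fun w => x w + (y w : ℚ) with hs0def
  have hs0cl : sameClass s0 x := fun w => ⟨y w, by simp [hs0def]⟩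
  have hs0S : S s0 := by
    refine ⟨fun v => ?_, hs0cl⟩
    obtain ⟨z, hz⟩ := mulVec_int A x s0 hx hs0cl v
    refine exists_nat_neg_of ?_ z hz
    have hsplit : (Aq A).mulVec s0 v = (Aq A).mulVec x v + ∑ w, Aq A v w * (y w : ℚ) := by
      simp only [Matrix.mulVec, dotProduct, hs0def]
      rw [← Finset.sum_add_distrib]
      exact Finset.sum_congr rfl fun w _ => by ring
    have hd0 : ∀ w, 0 ≤ (y w : ℚ) - (N : ℚ) * u0 w := fun w => by
      have := Int.le_ceil ((N : ℚ) * u0 w)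
      simp only [hy]
      linarith
    have hd1 : ∀ w, (y w : ℚ) - (N : ℚ) * u0 w ≤ 1 := fun w => by
      have := Int.ceil_lt_add_one ((N : ℚ) * u0 w)
      simp only [hy]
      linarith
    have hbd : ∑ w, Aq A v w * (y w : ℚ) ≤ -(N : ℚ) + ∑ w, |Aq A v w| := by
      have e : ∀ w ∈ Finset.univ, Aq A v w * (y w : ℚ) =
          Aq A v w * ((N : ℚ) * u0 w) + Aq A v w * ((y w : ℚ) - (N : ℚ) * u0 w) :=
        fun w _ => by ring
      rw [Finset.sum_congr rfl e, Finset.sum_add_distrib]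
      have e2 : ∑ w, Aq A v w * ((N : ℚ) * u0 w) = -(N : ℚ) := by
        have e3 : ∑ w, Aq A v w * ((N : ℚ) * u0 w) = (N : ℚ) * (Aq A).mulVec u0 v := by
          rw [Matrix.mulVec, dotProduct, Finset.mul_sum]
          exact Finset.sum_congr rfl fun w _ => by ring
        rw [e3, hBu0]
        simp
      have e4 : ∑ w, Aq A v w * ((y w : ℚ) - (N : ℚ) * u0 w) ≤ ∑ w, |Aq A v w| := by
        refine Finset.sum_le_sum fun w _ => ?_
        calc Aq A v w * ((y w : ℚ) - (N : ℚ) * u0 w)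
            ≤ |Aq A v w * ((y w : ℚ) - (N : ℚ) * u0 w)| := le_abs_self _
          _ = |Aq A v w| * |(y w : ℚ) - (N : ℚ) * u0 w| := abs_mul _ _
          _ ≤ |Aq A v w| * 1 := by
              refine mul_le_mul_of_nonneg_left ?_ (abs_nonneg _)
              rw [abs_of_nonneg (hd0 w)]
              exact hd1 w
          _ = |Aq A v w| := mul_one _
      linarith
    have hNv := hNq v
    rw [hsplit]
    linarith
  -- Coordinatewise minimizers
  have hcoordmin : ∀ v, ∃ sv, S sv ∧ ∀ s, S s → sv v ≤ s v := by
    intro v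
    set P : ℤ → Prop := fun k => ∃ s, S s ∧ s v = x v + (k : ℚ) with hP
    have Hinh : ∃ k, P k := by
      obtain ⟨k, hk⟩ := hs0cl v
      exact ⟨k, s0, hs0S, by linarith⟩
    have Hbdd : ∃ b, ∀ k, P k → b ≤ k := by
      refine ⟨⌈-x v⌉, ?_⟩
      rintro k ⟨s, hsS, hsv⟩
      have h0 : 0 ≤ s v := hSnn s hsS v
      have : -x v ≤ (k : ℚ) := by linarith
      exact Int.ceil_le.mpr this
    obtain ⟨lb, ⟨s, hsS, hsv⟩, hlb⟩ := Int.exists_least_of_bdd Hbdd Hinh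
    refine ⟨s, hsS, fun t htS => ?_⟩
    obtain ⟨k, hk⟩ := htS.2 v
    have hPk : P k := ⟨t, htS, by linarith⟩
    have hlbk : (lb : ℚ) ≤ (k : ℚ) := by exact_mod_cast hlb k hPk
    rw [hsv]
    linarith
  choose sv hsvS hsvmin using hcoordmin
  have hfold : ∀ F : Finset V, ∃ m, S m ∧ ∀ v ∈ F, m v ≤ sv v v := by
    intro F
    induction F using Finset.induction_on with
    | empty => exact ⟨s0, hs0S, by simp⟩
    | @insert a F' ha ih =>
      obtain ⟨m, hmS, hmF⟩ := ih
      refine ⟨fun w => min (m w) (sv a w), hminS m (sv a) hmS (hsvS a), ?_⟩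
      intro v hv
      rcases Finset.mem_insert.mp hv with rfl | hvF
      · exact min_le_right _ _
      · exact le_trans (min_le_left _ _) (hmF v hvF)
  obtain ⟨m, hmS, hmall⟩ := hfold Finset.univ
  have hmmin : ∀ s, S s → m ≤ s := fun s hs v =>
    le_trans (hmall v (Finset.mem_univ v)) (hsvmin v s hs)
  refine ⟨m, ⟨(cone_iff A hdet m).mpr hmS.1, hmS.2,
    fun t hc htcl => hmmin t ⟨(cone_iff A hdet t).mp hc, htcl⟩⟩, ?_⟩
  rintro t ⟨htc, htcl, htmin⟩
  have htS : S t := ⟨(cone_iff A hdet t).mp htc, htcl⟩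
  exact le_antisymm (htmin m ((cone_iff A hdet m).mpr hmS.1) hmS.2) (hmmin t htS)
end
end

section
/- Let I ⊂ V be nonempty and let W be the vertex set of a connected component of the full subgraph of T on V \ I. Then for every h ∈ H, the element j*_W(s_h) lies in the Lipman cone S'(T(W)) of T(W) and equals the minimal representative of its own class: j*_W(s_h) = s^{T(W)}_{h'}, where h' = [j*_W(s_h)] ∈ L'(T(W))/L(T(W)). -/
open Matrix

open scoped Classical

noncomputable section

open Plumbing

section Aux

variable {V : Type*} [Fintype V] [DecidableEq V]

lemma negDef_isUnit_det {A : Matrix V V ℤ} (h : NegDef A) : IsUnit (Aq A).det := by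
  rw [isUnit_iff_ne_zero]
  intro hd
  obtain ⟨v, hv0, hv⟩ := Matrix.exists_mulVec_eq_zero_iff.mpr hd
  have := h v hv0
  rw [hv] at this
  simp at this

lemma sum_smul_estar (A : Matrix V V ℤ) (a : V → ℚ) :
    (∑ v, a v • Estar A v) = (-(Aq A)⁻¹).mulVec a := by
  funext w
  simp [Estar, Matrix.mulVec, dotProduct, Finset.sum_apply, mul_comm]

lemma memS_iff (A : Matrix V V ℤ) (h : IsUnit (Aq A).det) (x : V → ℚ) :
    (∃ a : V → ℕ, x = ∑ v, ((a v : ℚ)) • Estar A v) ↔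
      ∀ v, ∃ n : ℕ, (Aq A).mulVec x v = -(n : ℚ) := by
  constructor
  · rintro ⟨a, rfl⟩ v
    refine ⟨a v, ?_⟩
    rw [sum_smul_estar, Matrix.neg_mulVec, Matrix.mulVec_neg, Matrix.mulVec_mulVec,
      Matrix.mul_nonsing_inv _ h, Matrix.one_mulVec]
    simp
  · intro hx
    choose n hn using hx
    refine ⟨n, ?_⟩
    rw [sum_smul_estar, Matrix.neg_mulVec, ← Matrix.mulVec_neg]
    have hAx : -(fun v => ((n v : ℚ))) = (Aq A).mulVec x := by
      funext v
      rw [Pi.neg_apply, hn v]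
    rw [hAx, Matrix.mulVec_mulVec, Matrix.nonsing_inv_mul _ h, Matrix.one_mulVec]

/-- Extension by zero. -/
def extz (W : Set V) (x : W → ℚ) : V → ℚ := fun v => if h : v ∈ W then x ⟨v, h⟩ else 0

lemma sum_extz (W : Set V) (f : V → ℚ) (x : W → ℚ) :
    ∑ v : V, f v * extz W x v = ∑ w : W, f w.1 * x w := by
  classical
  have h1 : ∑ v : V, f v * extz W x v = ∑ v ∈ W.toFinset, f v * extz W x v := by
    symm
    apply Finset.sum_subset (Finset.subset_univ _)
    intro v _ hv
    have hvW : v ∉ W := fun h => hv (Set.mem_toFinset.mpr h)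
    simp [extz, hvW]
  rw [h1, Finset.sum_subtype W.toFinset (fun v => Set.mem_toFinset)
      (fun v => f v * extz W x v)]
  refine Finset.sum_congr rfl fun w _ => ?_
  simp [extz, w.2]

lemma negDef_subM {A : Matrix V V ℤ} (hA : NegDef A) (W : Set V) : NegDef (subM A W) := by
  intro y hy
  set y' : V → ℚ := extz W y with hy'def
  have hy'0 : y' ≠ 0 := by
    intro h0
    apply hy
    funext w
    have : y' w.1 = 0 := by rw [h0]; rfl
    rwa [hy'def, extz, dif_pos w.2] at this
  have key : y ⬝ᵥ (Aq (subM A W)).mulVec y = y' ⬝ᵥ (Aq A).mulVec y' := by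
    have h1 : ∀ v : V, (Aq A).mulVec y' v = ∑ w : W, Aq A v w.1 * y w := by
      intro v
      simp only [Matrix.mulVec, dotProduct]
      exact sum_extz W (fun w => Aq A v w) y
    have h2 : ∀ v : W, (Aq (subM A W)).mulVec y v = (Aq A).mulVec y' v.1 := by
      intro v
      rw [h1]
      simp only [Matrix.mulVec, dotProduct]
      rfl
    calc y ⬝ᵥ (Aq (subM A W)).mulVec y
        = ∑ v : W, y v * (Aq A).mulVec y' v.1 := by
          simp only [dotProduct]
          exact Finset.sum_congr rfl fun v _ => by rw [h2]
      _ = ∑ v : W, (Aq A).mulVec y' v.1 * y v :=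
          Finset.sum_congr rfl fun v _ => mul_comm _ _
      _ = ∑ v : V, (Aq A).mulVec y' v * y' v := (sum_extz W _ y).symm
      _ = ∑ v : V, y' v * (Aq A).mulVec y' v :=
          Finset.sum_congr rfl fun v _ => mul_comm _ _
      _ = y' ⬝ᵥ (Aq A).mulVec y' := rfl
  rw [key]
  exact hA y' hy'0

end Aux

/-- for a connected component `W` of the complement of `I`, the
restriction `j*_W(s_h)` lies in the Lipman cone of `T(W)` and is the minimal
representative of its own class. -/
theorem statement14 (V : Type) [Fintype V] [DecidableEq V]
    (G : SimpleGraph V) (hG : G.IsTree)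
    (A : Matrix V V ℤ) (hAsymm : A.IsSymm)
    (hAadj : ∀ v w : V, v ≠ w → A v w = if G.Adj v w then 1 else 0)
    (hAneg : NegDef A)
    (I : Set V) (hI : I.Nonempty)
    (c : (G.induce Iᶜ).ConnectedComponent) (W : Set V) (hW : W = compSet G I c)
    (x : V → ℚ) (hx : memLp A x)
    (s : V → ℚ) (hsS : ∃ a : V → ℕ, s = ∑ v, (a v : ℚ) • Estar A v)
    (hscl : sameClass s x)
    (hsmin : ∀ s' : V → ℚ, (∃ a : V → ℕ, s' = ∑ v, (a v : ℚ) • Estar A v) →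
      sameClass s' x → s ≤ s') :
    (∃ b : W → ℕ, jstar A W s = ∑ v : W, (b v : ℚ) • Estar (subM A W) v) ∧
    ∀ s' : W → ℚ, (∃ b : W → ℕ, s' = ∑ v : W, (b v : ℚ) • Estar (subM A W) v) →
      sameClass s' (jstar A W s) → jstar A W s ≤ s' := by
  classical
  have hdetB : IsUnit (Aq A).det := negDef_isUnit_det hAneg
  have hnegW : NegDef (subM A W) := negDef_subM hAneg W
  have hdetBw : IsUnit (Aq (subM A W)).det := negDef_isUnit_det hnegW
  obtain ⟨a, hsa⟩ := hsS
  have hAs : ∀ v, (Aq A).mulVec s v = -((a v : ℚ)) := by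
    intro v
    rw [hsa, sum_smul_estar, Matrix.neg_mulVec, Matrix.mulVec_neg, Matrix.mulVec_mulVec,
      Matrix.mul_nonsing_inv _ hdetB, Matrix.one_mulVec]
    simp
  -- off-diagonal entries of `A` are nonnegative
  have hoff : ∀ v w : V, v ≠ w → (0 : ℚ) ≤ Aq A v w := by
    intro v w hne
    have : Aq A v w = ((A v w : ℤ) : ℚ) := rfl
    rw [this, hAadj v w hne]
    split_ifs <;> norm_num
  have hsubEntry : ∀ (u w : W), Aq (subM A W) u w = Aq A u.1 w.1 := fun u w => rfl
  -- `A_W (j*_W s) = (A s)|_W`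
  have hjs : ∀ w : W, (Aq (subM A W)).mulVec (jstar A W s) w = (Aq A).mulVec s w.1 := by
    intro w
    show ((Aq (subM A W)).mulVec ((Aq (subM A W))⁻¹.mulVec _)) w = _
    rw [Matrix.mulVec_mulVec, Matrix.mul_nonsing_inv _ hdetBw, Matrix.one_mulVec]
  have hjsS : ∀ w : W, ∃ n : ℕ, (Aq (subM A W)).mulVec (jstar A W s) w = -(n : ℚ) :=
    fun w => ⟨a w.1, by rw [hjs w, hAs w.1]⟩
  refine ⟨(memS_iff (subM A W) hdetBw _).mpr hjsS, ?_⟩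
  rintro s' hs'S hs'cl
  have hAs' : ∀ w, ∃ n : ℕ, (Aq (subM A W)).mulVec s' w = -(n : ℚ) :=
    (memS_iff (subM A W) hdetBw s').mp hs'S
  set j : W → ℚ := jstar A W s with hjdef
  set δ : W → ℚ := fun w => min (s' w) (j w) - j w with hδdef
  have hδ_nonpos : ∀ w, δ w ≤ 0 := fun w => sub_nonpos.mpr (min_le_right _ _)
  have hδ_int : ∀ w, ∃ n : ℤ, δ w = (n : ℚ) := by
    intro w
    rcases le_total (s' w) (j w) with h | h
    · obtain ⟨n, hn⟩ := hs'cl w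
      exact ⟨n, by simp only [hδdef, min_eq_left h]; exact hn⟩
    · exact ⟨0, by simp [hδdef, min_eq_right h]⟩
  choose nδ hnδ using hδ_int
  -- integrality of `A_W δ`
  have hAδ_int : ∀ w : W, ∃ k : ℤ, (Aq (subM A W)).mulVec δ w = (k : ℚ) := by
    intro w
    refine ⟨∑ u : W, subM A W w u * nδ u, ?_⟩
    show ∑ u : W, Aq (subM A W) w u * δ u = _
    push_cast
    refine Finset.sum_congr rfl fun u _ => ?_
    rw [hnδ u]
    rfl
  -- `m = j + δ = min(s', j)` lies in the Lipman cone of `T(W)`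
  have hm : ∀ w : W, ∃ n : ℕ,
      (Aq (subM A W)).mulVec (fun u => j u + δ u) w = -(n : ℚ) := by
    intro w
    have hsplit : (Aq (subM A W)).mulVec (fun u => j u + δ u) w
        = (Aq (subM A W)).mulVec j w + (Aq (subM A W)).mulVec δ w := by
      have : (fun u => j u + δ u) = j + δ := rfl
      rw [this, Matrix.mulVec_add]
      rfl
    obtain ⟨k, hk⟩ := hAδ_int w
    have hmin_eq : (fun u => j u + δ u) = fun u => min (s' u) (j u) := by
      funext u; simp [hδdef]
    have hle : (Aq (subM A W)).mulVec (fun u => j u + δ u) w ≤ 0 := by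
      rw [hmin_eq]
      have hbound : ∀ z : W → ℚ, min (s' w) (j w) = z w →
          (∀ u, min (s' u) (j u) ≤ z u) →
          (Aq (subM A W)).mulVec (fun u => min (s' u) (j u)) w
            ≤ (Aq (subM A W)).mulVec z w := by
        intro z hzw hzle
        show ∑ u : W, Aq (subM A W) w u * min (s' u) (j u) ≤ ∑ u : W, Aq (subM A W) w u * z u
        refine Finset.sum_le_sum fun u _ => ?_
        rcases eq_or_ne u w with rfl | hne
        · rw [hzw]
        · have h0 : (0 : ℚ) ≤ Aq (subM A W) w u := by
            rw [hsubEntry w u]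
            exact hoff w.1 u.1 fun h => hne (Subtype.ext h.symm)
          exact mul_le_mul_of_nonneg_left (hzle u) h0
      rcases le_total (s' w) (j w) with h | h
      · have := hbound s' (min_eq_left h) (fun u => min_le_left _ _)
        obtain ⟨n, hn⟩ := hAs' w
        rw [hn] at this
        refine this.trans ?_
        simp
      · have := hbound j (min_eq_right h) (fun u => min_le_right _ _)
        rw [hjs w, hAs w.1] at this
        refine this.trans ?_
        simp
    have hkint : (Aq (subM A W)).mulVec (fun u => j u + δ u) w
        = -((a w.1 : ℤ) : ℚ) + (k : ℚ) := by
      rw [hsplit, hk, hjs w, hAs w.1]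
      push_cast
      ring
    have hz : (0 : ℤ) ≤ (a w.1 : ℤ) - k := by
      have h5 : (-((a w.1 : ℤ) : ℚ) + (k : ℚ)) ≤ 0 := by rw [← hkint]; exact hle
      have h6 : ((k - (a w.1 : ℤ) : ℤ) : ℚ) ≤ 0 := by push_cast at h5 ⊢; linarith
      have := Int.cast_nonpos.mp h6
      omega
    refine ⟨((a w.1 : ℤ) - k).toNat, ?_⟩
    rw [hkint]
    have ht := Int.toNat_of_nonneg hz
    have h7 : ((((a w.1 : ℤ) - k).toNat : ℕ) : ℚ) = ((a w.1 : ℚ)) - (k : ℚ) := by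
      exact_mod_cast ht
    rw [h7]
    push_cast
    ring
  -- the lattice element `t = s + extension of δ by zero`
  set t : V → ℚ := fun v => s v + extz W δ v with htdef
  have hAt : ∀ v, (Aq A).mulVec t v
      = (Aq A).mulVec s v + ∑ u : W, Aq A v u.1 * δ u := by
    intro v
    have h1 : t = s + extz W δ := rfl
    rw [h1, Matrix.mulVec_add]
    have h2 : (Aq A).mulVec (extz W δ) v = ∑ u : W, Aq A v u.1 * δ u :=
      sum_extz W (fun u => Aq A v u) δ
    rw [Pi.add_apply, h2]
  have htS : ∀ v, ∃ n : ℕ, (Aq A).mulVec t v = -(n : ℚ) := by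
    intro v
    by_cases hv : v ∈ W
    · obtain ⟨n, hn⟩ := hm ⟨v, hv⟩
      refine ⟨n, ?_⟩
      rw [hAt v, ← hn]
      have hsplit : (Aq (subM A W)).mulVec (fun u => j u + δ u) ⟨v, hv⟩
          = (Aq (subM A W)).mulVec j ⟨v, hv⟩ + (Aq (subM A W)).mulVec δ ⟨v, hv⟩ := by
        have : (fun u => j u + δ u) = j + δ := rfl
        rw [this, Matrix.mulVec_add]
        rfl
      rw [hsplit, hjs ⟨v, hv⟩]
      congr 1
    · obtain ⟨k, hk⟩ : ∃ k : ℤ, ∑ u : W, Aq A v u.1 * δ u = (k : ℚ) := by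
        refine ⟨∑ u : W, A v u.1 * nδ u, ?_⟩
        push_cast
        refine Finset.sum_congr rfl fun u _ => ?_
        rw [hnδ u]
        rfl
      have hk0 : (k : ℚ) ≤ 0 := by
        rw [← hk]
        refine Finset.sum_nonpos fun u _ => ?_
        have hvu : v ≠ u.1 := fun h => hv (h ▸ u.2)
        exact mul_nonpos_of_nonneg_of_nonpos (hoff v u.1 hvu) (hδ_nonpos u)
      have hkz : k ≤ 0 := Int.cast_nonpos.mp hk0
      refine ⟨((a v : ℤ) - k).toNat, ?_⟩
      rw [hAt v, hAs v, hk]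
      have hz : (0 : ℤ) ≤ (a v : ℤ) - k := by omega
      have ht := Int.toNat_of_nonneg hz
      have h7 : ((((a v : ℤ) - k).toNat : ℕ) : ℚ) = ((a v : ℚ)) - (k : ℚ) := by
        exact_mod_cast ht
      rw [h7]
      ring
  have htmem : ∃ a' : V → ℕ, t = ∑ v, ((a' v : ℕ) : ℚ) • Estar A v :=
    (memS_iff A hdetB t).mpr htS
  have htcl : sameClass t x := by
    intro v
    obtain ⟨n, hn⟩ := hscl v
    by_cases hv : v ∈ W
    · have hkk := hnδ ⟨v, hv⟩
      refine ⟨n + nδ ⟨v, hv⟩, ?_⟩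
      have h1 : t v = s v + δ ⟨v, hv⟩ := by
        simp only [htdef, extz, dif_pos hv]
      rw [h1, hkk]
      push_cast
      linarith
    · refine ⟨n, ?_⟩
      have h1 : t v = s v := by
        simp only [htdef, extz, dif_neg hv, add_zero]
      rw [h1]
      exact hn
  have hst : s ≤ t := hsmin t htmem htcl
  intro w
  have h1 : s w.1 ≤ t w.1 := hst w.1
  have h2 : t w.1 = s w.1 + δ w := by
    simp only [htdef, extz, dif_pos w.2]
  have h3 : 0 ≤ δ w := by rw [h2] at h1; linarith
  have h4 : j w ≤ min (s' w) (j w) := by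
    have : δ w = min (s' w) (j w) - j w := rfl
    linarith [this ▸ h3]
  exact le_trans h4 (min_le_left _ _)
end
end
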